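/- arXiv:1811.04800 — 5 statements merged into one kernel-verified Lean document; each statement's English description precedes it below -/
import Mathlib

section
/- Let Π = (𝒜, ℰ, ℛ) be an epistemic logic program, Φ ⊆ ℰ a guess, and suppose 𝒴 = 𝒮ℰ_Π(Φ) is non-empty. Then there is a set 𝒞 ⊆ { Y | (X,Y) ∈ 𝒴 } that is Φ-compatible w.r.t. ℰ and has cardinality at most max(|Φ|, 1). -/
variable {V : Type}

/-- A (default-negation) literal: an atom or its default negation. -/
inductive Lit (V : Type) : Type
  | pos (a : V) : Lit V
  | neg (a : V) : Lit V

namespace Lit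

/-- `I ⊨ ℓ`. -/
def sat (I : Set V) : Lit V → Prop
  | pos a => a ∈ I
  | neg a => a ∉ I

/-- The complementary literal (so that `I ⊨ ¬ℓ` iff `I ⊨ ℓ.flip`). -/
def flip : Lit V → Lit V
  | pos a => neg a
  | neg a => pos a

/-- The underlying atom of a literal. -/
def atom : Lit V → V
  | pos a => a
  | neg a => a

end Lit

/-- A standard (ASP) rule `head ← pos, {¬ℓ | ℓ ∈ neg}`; the set `neg` collects the
literals occurring under one extra default negation in the body (so an atom `a ∈ pos`
is a positive body atom, `Lit.pos c ∈ neg` encodes the body element `¬c`, and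
`Lit.neg d ∈ neg` encodes the doubly negated body element `¬¬d`). -/
structure Rule (V : Type) : Type where
  head : Set V
  pos : Set V
  neg : Set (Lit V)

namespace Rule

/-- The rule only uses atoms from `A`. -/
def wf (r : Rule V) (A : Set V) : Prop :=
  r.head ⊆ A ∧ r.pos ⊆ A ∧ ∀ ℓ ∈ r.neg, ℓ.atom ∈ A

/-- `I` is a model of the rule. -/
def sat (I : Set V) (r : Rule V) : Prop :=
  (r.pos ⊆ I ∧ ∀ ℓ ∈ r.neg, ¬ ℓ.sat I) → ∃ a ∈ r.head, a ∈ I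

/-- `X` satisfies the GL-reduct of the rule w.r.t. `Y`: if the rule survives the
reduct (no negated body literal is satisfied by `Y`), then `X` satisfies the
remaining rule `head ← pos`. -/
def redSat (Y X : Set V) (r : Rule V) : Prop :=
  (∀ ℓ ∈ r.neg, ¬ ℓ.sat Y) → (r.pos ⊆ X → ∃ a ∈ r.head, a ∈ X)

end Rule

/-- A ground logic program `(𝒜, ℛ)`. -/
structure Program (V : Type) : Type where
  A : Set V
  R : Set (Rule V)

namespace Program

def wf (P : Program V) : Prop := ∀ r ∈ P.R, r.wf P.A

/-- `I ⊨ P`. -/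
def model (P : Program V) (I : Set V) : Prop := ∀ r ∈ P.R, r.sat I

/-- `X ⊨ P^Y` (the GL-reduct). -/
def redModel (P : Program V) (Y X : Set V) : Prop := ∀ r ∈ P.R, r.redSat Y X

/-- `M` is an answer set of `P`. -/
def answerSet (P : Program V) (M : Set V) : Prop :=
  M ⊆ P.A ∧ P.model M ∧ ¬ ∃ M', M' ⊂ M ∧ P.redModel M M'

/-- `AS(P)`, the set of answer sets. -/
def AS (P : Program V) : Set (Set V) := {M | P.answerSet M}

/-- The set of SE-models `(X,Y)` with `X ⊆ Y ⊆ 𝒜`, `Y ⊨ P` and `X ⊨ P^Y`. -/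
def SE (P : Program V) : Set (Set V × Set V) :=
  {p | p.1 ⊆ p.2 ∧ p.2 ⊆ P.A ∧ P.model p.2 ∧ P.redModel p.2 p.1}

/-- Componentwise union of programs. -/
def union (P₁ P₂ : Program V) : Program V := ⟨P₁.A ∪ P₂.A, P₁.R ∪ P₂.R⟩

/-- Strong equivalence of plain logic programs. -/
def strongEq (P₁ P₂ : Program V) : Prop :=
  ∀ P : Program V, P.wf → (P₁.union P).AS = (P₂.union P).AS

end Program

/-- An ELP rule `head ← opos, ¬oneg, not epos, ¬ not eneg`: epistemic literals `not ℓ`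
are identified with the literal `ℓ` they negate; `epos` collects the literals occurring
under plain epistemic negation and `eneg` those occurring under default-negated
epistemic negation. -/
structure ERule (V : Type) : Type where
  head : Set V
  opos : Set V
  oneg : Set (Lit V)
  epos : Set (Lit V)
  eneg : Set (Lit V)

namespace ERule

/-- The rule only uses atoms from `A` and epistemic literals from `E`. -/
def wf (r : ERule V) (A : Set V) (E : Set (Lit V)) : Prop :=
  r.head ⊆ A ∧ r.opos ⊆ A ∧ (∀ ℓ ∈ r.oneg, ℓ.atom ∈ A) ∧ r.epos ⊆ E ∧ r.eneg ⊆ E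

/-- The rule of the epistemic reduct w.r.t. guess `Φ` (meaningful when no `eneg`
literal belongs to `Φ`, in which case: epistemic literals `not ℓ ∈ Φ` become `⊤`,
the remaining `not ℓ` in `epos` become `¬ℓ`, and `¬ not ℓ` in `eneg` becomes `¬¬ℓ`,
i.e. `¬(ℓ.flip)`, reading triple negations as single ones). -/
def reduct (r : ERule V) (Φ : Set (Lit V)) : Rule V :=
  ⟨r.head, r.opos, r.oneg ∪ (r.epos \ Φ) ∪ (Lit.flip '' r.eneg)⟩

/-- The underlying plain rule of an epistemic-negation-free ELP rule. -/
def toRule (r : ERule V) : Rule V := ⟨r.head, r.opos, r.oneg⟩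

end ERule

/-- A plain rule viewed as an ELP rule. -/
def Rule.toERule (r : Rule V) : ERule V := ⟨r.head, r.pos, r.neg, ∅, ∅⟩

/-- An epistemic logic program `(𝒜, ℰ, ℛ)`. -/
structure ELP (V : Type) : Type where
  A : Set V
  E : Set (Lit V)
  R : Set (ERule V)

/-- `I` is `Φ`-compatible w.r.t. `E`. -/
def compatible (E Φ : Set (Lit V)) (I : Set (Set V)) : Prop :=
  I.Nonempty ∧ (∀ ℓ ∈ Φ, ∃ J ∈ I, ¬ ℓ.sat J) ∧ (∀ ℓ ∈ E \ Φ, ∀ J ∈ I, ℓ.sat J)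

/-- `Φ` is realizable in the set `I` of interpretations (w.r.t. `E`). -/
def realizableIn (E Φ : Set (Lit V)) (I : Set (Set V)) : Prop :=
  ∃ I', I' ⊆ I ∧ compatible E Φ I'

/-- A guess `Φ` is consistent w.r.t. `E`: whenever `E` contains both `not a` and
`not ¬a`, `Φ` contains at least one of them. -/
def consistentGuess (E Φ : Set (Lit V)) : Prop :=
  ∀ a : V, Lit.pos a ∈ E → Lit.neg a ∈ E → (Lit.pos a ∈ Φ ∨ Lit.neg a ∈ Φ)

namespace ELP

/-- Well-formedness: `E` consists of epistemic literals over `A`, and every rule is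
over `A` and `E`. -/
def wf (P : ELP V) : Prop :=
  (∀ ℓ ∈ P.E, ℓ.atom ∈ P.A) ∧ ∀ r ∈ P.R, r.wf P.A P.E

/-- An epistemic-negation-free (plain ASP) program viewed as an ELP. -/
def isASP (P : ELP V) : Prop := P.E = ∅ ∧ ∀ r ∈ P.R, r.epos = ∅ ∧ r.eneg = ∅

/-- Componentwise union of ELPs. -/
def union (P₁ P₂ : ELP V) : ELP V := ⟨P₁.A ∪ P₂.A, P₁.E ∪ P₂.E, P₁.R ∪ P₂.R⟩

/-- The epistemic reduct `P^Φ`: rules with some `eneg` literal in `Φ` are deleted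
(their body contains `¬⊤`), the remaining rules are reduced. -/
def eReduct (P : ELP V) (Φ : Set (Lit V)) : Program V :=
  ⟨P.A, {q | ∃ r ∈ P.R, (∀ ℓ ∈ r.eneg, ℓ ∉ Φ) ∧ q = r.reduct Φ}⟩

/-- `M` is a candidate world view of `P` w.r.t. the guess `Φ`. -/
def isCWVwrt (P : ELP V) (Φ : Set (Lit V)) (M : Set (Set V)) : Prop :=
  Φ ⊆ P.E ∧ M = (P.eReduct Φ).AS ∧ compatible P.E Φ M

/-- `M` is a candidate world view of `P`. -/
def isCWV (P : ELP V) (M : Set (Set V)) : Prop := ∃ Φ, P.isCWVwrt Φ M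

/-- `M` is a world view of `P`: a CWV whose associated guess is subset-maximal. -/
def isWV (P : ELP V) (M : Set (Set V)) : Prop :=
  ∃ Φ, P.isCWVwrt Φ M ∧ ∀ Φ' M', P.isCWVwrt Φ' M' → ¬ Φ ⊂ Φ'

/-- `Φ` is realizable in `P`: realizable in the set of models of `P^Φ`. -/
def realizable (P : ELP V) (Φ : Set (Lit V)) : Prop :=
  realizableIn P.E Φ {I | I ⊆ P.A ∧ (P.eReduct Φ).model I}

/-- The SE-function of `P`: `SE(Π^Φ)` if `Φ` is realizable in `P`, and `∅` otherwise. -/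
def SEfun (P : ELP V) (Φ : Set (Lit V)) : Set (Set V × Set V) :=
  {p | P.realizable Φ ∧ p ∈ (P.eReduct Φ).SE}

/-- CWV-equivalence. -/
def cwvEq (P₁ P₂ : ELP V) : Prop := ∀ M, P₁.isCWV M ↔ P₂.isCWV M

/-- WV-equivalence. -/
def wvEq (P₁ P₂ : ELP V) : Prop := ∀ M, P₁.isWV M ↔ P₂.isWV M

/-- Strong ELP-CWV-equivalence. -/
def strongELPCWVEq (P₁ P₂ : ELP V) : Prop :=
  ∀ Q : ELP V, Q.wf → cwvEq (P₁.union Q) (P₂.union Q)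

/-- Strong ELP-WV-equivalence. -/
def strongELPWVEq (P₁ P₂ : ELP V) : Prop :=
  ∀ Q : ELP V, Q.wf → wvEq (P₁.union Q) (P₂.union Q)

/-- Strong ASP-CWV-equivalence. -/
def strongASPCWVEq (P₁ P₂ : ELP V) : Prop :=
  ∀ Q : ELP V, Q.wf → Q.isASP → cwvEq (P₁.union Q) (P₂.union Q)

/-- Strong ASP-WV-equivalence. -/
def strongASPWVEq (P₁ P₂ : ELP V) : Prop :=
  ∀ Q : ELP V, Q.wf → Q.isASP → wvEq (P₁.union Q) (P₂.union Q)

end ELP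

/-- The Gelfond-CWA program `p' ← ¬ not ¬p` over `𝒜 = {p, p'}`, `ℰ = {not p, not ¬p}`. -/
def GelfondCWA (p p' : V) : ELP V :=
  ⟨{p, p'}, {Lit.pos p, Lit.neg p}, {⟨{p'}, ∅, ∅, ∅, {Lit.neg p}⟩}⟩

/-- The Shen-Eiter-CWA program `p' ← not p` over `𝒜 = {p, p'}`, `ℰ = {not p, not ¬p}`. -/
def ShenEiterCWA (p p' : V) : ELP V :=
  ⟨{p, p'}, {Lit.pos p, Lit.neg p}, {⟨{p'}, ∅, ∅, {Lit.pos p}, ∅⟩}⟩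

/-! Realizability of `Φ` provides a `Φ`-compatible set of models `Y` of `Π^Φ`, and each such `Y`
yields the SE-model `(Y, Y)`. Compatibility survives passing to a subset as long as it is
non-empty and keeps, for every `not ℓ ∈ Φ`, one interpretation falsifying `ℓ`; one witness per
literal of `Φ` (or a single interpretation when `Φ = ∅`) gives the bound `max |Φ| 1`. -/

theorem Program.mem_SE_self {P : Program V} {Y : Set V} (hYA : Y ⊆ P.A) (hY : P.model Y) :
    (Y, Y) ∈ P.SE :=
  ⟨subset_rfl, hYA, hY, fun r hr hneg hpos => hY r hr ⟨hpos, hneg⟩⟩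

namespace compatible

variable {E Φ : Set (Lit V)} {I C : Set (Set V)}

theorem of_subset (h : compatible E Φ I) (hCI : C ⊆ I) (hC : C.Nonempty)
    (hwit : ∀ ℓ ∈ Φ, ∃ J ∈ C, ¬ ℓ.sat J) : compatible E Φ C :=
  ⟨hC, hwit, fun ℓ hℓ J hJ => h.2.2 ℓ hℓ J (hCI hJ)⟩

theorem exists_subset_ncard_le (h : compatible E Φ I) (hΦ : Φ.Finite) :
    ∃ C ⊆ I, compatible E Φ C ∧ C.Finite ∧ C.ncard ≤ max Φ.ncard 1 := by
  obtain ⟨J₀, hJ₀⟩ := h.1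
  rcases Φ.eq_empty_or_nonempty with rfl | hΦne
  · have hCI : {J₀} ⊆ I := Set.singleton_subset_iff.2 hJ₀
    exact ⟨{J₀}, hCI, h.of_subset hCI ⟨J₀, rfl⟩ (by simp), Set.finite_singleton J₀, by simp⟩
  · have hwit : ∀ ℓ, ∃ J ∈ I, ℓ ∈ Φ → ¬ ℓ.sat J := fun ℓ => by
      by_cases hℓ : ℓ ∈ Φ
      · obtain ⟨J, hJ, hsat⟩ := h.2.1 ℓ hℓ
        exact ⟨J, hJ, fun _ => hsat⟩
      · exact ⟨J₀, hJ₀, fun hℓΦ => absurd hℓΦ hℓ⟩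
    choose f hfI hfsat using hwit
    have hCI : f '' Φ ⊆ I := Set.image_subset_iff.2 fun ℓ _ => hfI ℓ
    refine ⟨f '' Φ, hCI, h.of_subset hCI (hΦne.image f) ?_, hΦ.image f,
      le_max_of_le_left (Set.ncard_image_le hΦ)⟩
    exact fun ℓ hℓ => ⟨f ℓ, Set.mem_image_of_mem f hℓ, hfsat ℓ hℓ⟩

end compatible

theorem stmt11_general {V : Type} (P : ELP V) (Φ : Set (Lit V))
    (hΦfin : Φ.Finite) (hne : (P.SEfun Φ).Nonempty) :
    ∃ C : Set (Set V), C ⊆ {Y | ∃ X, (X, Y) ∈ P.SEfun Φ} ∧ compatible P.E Φ C ∧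
      C.Finite ∧ C.ncard ≤ max Φ.ncard 1 := by
  obtain ⟨p, hp⟩ := hne
  obtain ⟨I, hImodels, hI⟩ := hp.1
  obtain ⟨C, hCI, hC, hCfin, hCcard⟩ := hI.exists_subset_ncard_le hΦfin
  refine ⟨C, fun Y hY => ?_, hC, hCfin, hCcard⟩
  obtain ⟨hYA, hY⟩ := hImodels (hCI hY)
  exact ⟨Y, hp.1, Program.mem_SE_self hYA hY⟩

/-- If `𝒴 = 𝒮ℰ_P(Φ)` is non-empty, then some set
`𝒞 ⊆ { Y | (X,Y) ∈ 𝒴 }` of cardinality at most `max |Φ| 1` is `Φ`-compatible. -/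
theorem stmt11 {V : Type} (P : ELP V) (hwf : P.wf) (Φ : Set (Lit V)) (hΦ : Φ ⊆ P.E)
    (hΦfin : Φ.Finite) (hne : (P.SEfun Φ).Nonempty) :
    ∃ C : Set (Set V), C ⊆ {Y | ∃ X, (X, Y) ∈ P.SEfun Φ} ∧ compatible P.E Φ C ∧
      C.Finite ∧ C.ncard ≤ max Φ.ncard 1 :=
  stmt11_general P Φ hΦfin hne
end

section
/- An ELP rule r is tautological if and only if for the single-rule ELP Π_r = (𝒜, ℰ, {r}) it holds that 𝒮ℰ_{Π_r}(Φ) = 𝒮_𝒜 for each consistent guess Φ ⊆ ℰ. -/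
variable {V : Type}

/-!
(⇐) If some set of interpretations is `Θ`-compatible, then `Θ ∩ ℰ` is consistent; by hypothesis
`r^Θ = r^(Θ ∩ ℰ)` then holds in every SE-pair, so adding it changes no answer set of
`(Π ∪ Q)^Θ`.

(⇒) The constraints `⊥ ← ¬ not ℓ` (`ℓ ∈ Θ`) and `⊥ ← not ℓ` (`ℓ ∉ Θ`) pin the guess of every
CWV, so strong equivalence yields equal answer sets of the two reducts at a fixed guess `Θ`
whenever these answer sets form a `Θ`-compatible family. Suppose `r` survives `Φ`, the negative
body of `r^Φ` holds in `Y`, and `B ⊆ Y \ H` for the positive body `B` and head `H` of `r`. Let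
`W` be `Y` with every literal `ℓ` such that `not ℓ ∈ r.epos` and `Y ⊨ ℓ` made false, and let `Θ`
be the guess read off `{Y, W}`: then `{Y, W}` is `Θ`-compatible and the negative body of `r^Θ`
still holds in `Y`. Choice rules and constraints make `Y` and `W` the only answer sets. If `Y`
misses `H`, i.e. `Y ⊭ r^Φ`, then `Y` is an answer set without `r` but not with it, so every
interpretation is a model of `r^Φ`. Otherwise `Y` is minimal only because `r` derives an atom of
`H` from `Y \ H`, while without `r` the model `Y \ H` of the reduct shows that `Y` is no answer
set; so `(X, Y)` is an SE-model of `r^Φ` whenever `X ⊆ Y`.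
-/

namespace Lit

@[simp] lemma sat_flip (I : Set V) (ℓ : Lit V) : ℓ.flip.sat I ↔ ¬ ℓ.sat I := by
  cases ℓ <;> simp [flip, sat]

@[simp] lemma atom_flip (ℓ : Lit V) : ℓ.flip.atom = ℓ.atom := by
  cases ℓ <;> rfl

lemma sat_inter_of_atom_mem {I A : Set V} {ℓ : Lit V} (h : ℓ.atom ∈ A) :
    ℓ.sat (I ∩ A) ↔ ℓ.sat I := by
  cases ℓ <;> simp_all [sat, atom]

lemma sat_symmDiff (I T : Set V) (ℓ : Lit V) :
    ℓ.sat (symmDiff I T) ↔ (ℓ.sat I ↔ ℓ.atom ∉ T) := by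
  cases ℓ <;> simp [sat, atom, Set.mem_symmDiff] <;> tauto

lemma sat_iff_sat_iff (I J : Set V) (ℓ : Lit V) :
    (ℓ.sat I ↔ ℓ.sat J) ↔ (ℓ.atom ∈ I ↔ ℓ.atom ∈ J) := by
  cases ℓ <;> simp [sat, atom, not_iff_not]

end Lit

namespace Rule

lemma sat_inter {I A : Set V} {q : Rule V} (hq : q.wf A) : q.sat (I ∩ A) ↔ q.sat I := by
  obtain ⟨hH, hP, hN⟩ := hq
  have hneg : (∀ ℓ ∈ q.neg, ¬ ℓ.sat (I ∩ A)) ↔ ∀ ℓ ∈ q.neg, ¬ ℓ.sat I :=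
    forall₂_congr fun ℓ hℓ => not_congr (Lit.sat_inter_of_atom_mem (hN ℓ hℓ))
  simp only [sat, Set.subset_inter_iff, hneg, Set.mem_inter_iff]
  exact ⟨fun h ⟨hPI, hNI⟩ => (h ⟨⟨hPI, hP⟩, hNI⟩).imp fun _ ⟨ha, haI, _⟩ => ⟨ha, haI⟩,
    fun h ⟨⟨hPI, _⟩, hNI⟩ => (h ⟨hPI, hNI⟩).imp fun a ⟨ha, haI⟩ => ⟨ha, haI, hH ha⟩⟩

lemma redSat_of_redSat_inter {X Y A : Set V} {q : Rule V} (hq : q.wf A)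
    (h : q.redSat (Y ∩ A) (X ∩ A)) : q.redSat Y X := by
  intro hN hP
  obtain ⟨a, ha, haX, -⟩ :=
    h (fun ℓ hℓ => (Lit.sat_inter_of_atom_mem (hq.2.2 ℓ hℓ)).not.mpr (hN ℓ hℓ))
      (Set.subset_inter hP hq.2.1)
  exact ⟨a, ha, haX⟩

/-- The constraint `⊥ ← ¬ℓ`. -/
def force (ℓ : Lit V) : Rule V := ⟨∅, ∅, {ℓ}⟩

@[simp] lemma sat_force {I : Set V} {ℓ : Lit V} : (force ℓ).sat I ↔ ℓ.sat I := by
  simp [force, sat]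

@[simp] lemma redSat_force {X Y : Set V} {ℓ : Lit V} : (force ℓ).redSat Y X ↔ ℓ.sat Y := by
  simp [force, redSat]

/-- The rule `w ← p, {¬m | m ∈ n}, ¬¬w`. -/
def choice (w : V) (p : Set V) (n : Set (Lit V)) : Rule V := ⟨{w}, p, insert (Lit.neg w) n⟩

lemma sat_choice (I : Set V) (w : V) (p : Set V) (n : Set (Lit V)) : (choice w p n).sat I := by
  rintro ⟨-, hn⟩
  exact ⟨w, rfl, by simpa [Lit.sat] using hn _ (Set.mem_insert _ _)⟩

lemma redSat_choice {X Y : Set V} {w : V} {p : Set V} {n : Set (Lit V)} :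
    (choice w p n).redSat Y X ↔ (w ∈ Y → (∀ m ∈ n, ¬ m.sat Y) → p ⊆ X → w ∈ X) := by
  simp [choice, redSat, Lit.sat]

/-- The constraint `⊥ ← ℓ, ¬ℓ'`, with the body literal `ℓ` written as `¬ℓ.flip`. -/
def implies (ℓ ℓ' : Lit V) : Rule V := ⟨∅, ∅, {ℓ.flip, ℓ'}⟩

lemma sat_implies {I : Set V} {ℓ ℓ' : Lit V} : (implies ℓ ℓ').sat I ↔ (ℓ.sat I → ℓ'.sat I) := by
  simp [implies, sat]

end Rule

namespace ERule

lemma reduct_inter_of_epos_subset {r : ERule V} {E Θ : Set (Lit V)} (he : r.epos ⊆ E) :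
    r.reduct (Θ ∩ E) = r.reduct Θ := by
  simp only [reduct, Rule.mk.injEq, true_and]
  congr 2
  ext ℓ
  simp only [Set.mem_sdiff, Set.mem_inter_iff]
  exact and_congr_right fun hℓ => not_congr (and_iff_left (he hℓ))

lemma wf_reduct {r : ERule V} {A : Set V} {E : Set (Lit V)} (hr : r.wf A E)
    (hE : ∀ ℓ ∈ E, ℓ.atom ∈ A) (Θ : Set (Lit V)) : (r.reduct Θ).wf A := by
  obtain ⟨hH, hP, hN, hEp, hEn⟩ := hr
  refine ⟨hH, hP, ?_⟩
  rintro ℓ ((hℓ | hℓ) | ⟨m, hm, rfl⟩)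
  · exact hN ℓ hℓ
  · exact hE ℓ (hEp hℓ.1)
  · simpa using hE m (hEn hm)

/-- `r` survives the epistemic reduct w.r.t. `Φ`, and `Y` satisfies the negative body of
`r^Φ`. -/
def ReductActive (r : ERule V) (Φ : Set (Lit V)) (Y : Set V) : Prop :=
  (∀ ℓ ∈ r.eneg, ℓ ∉ Φ) ∧ ∀ m ∈ (r.reduct Φ).neg, ¬ m.sat Y

def satEpos (r : ERule V) (Y : Set V) : Set (Lit V) := {ℓ ∈ r.epos | ℓ.sat Y}

namespace ReductActive

variable {r : ERule V} {Φ : Set (Lit V)} {Y : Set V}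

lemma sat_of_mem_eneg (h : r.ReductActive Φ Y) {ℓ : Lit V} (hℓ : ℓ ∈ r.eneg) : ℓ.sat Y := by
  simpa using h.2 ℓ.flip (Or.inr ⟨ℓ, hℓ, rfl⟩)

lemma atom_notMem_satEpos (h : r.ReductActive Φ Y) {ℓ : Lit V} (hℓ : ℓ ∈ r.eneg) :
    ℓ.atom ∉ Lit.atom '' r.satEpos Y := by
  rintro ⟨ℓ', ⟨hℓ'E, hℓ'Y⟩, hat⟩
  have hℓY := h.sat_of_mem_eneg hℓ
  -- `ℓ'` is `ℓ` itself, which then belongs to `epos \ Φ`, or its complement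
  cases ℓ <;> cases ℓ' <;> simp only [Lit.atom] at hat <;> subst hat
  · exact h.2 _ (Or.inl (Or.inr ⟨hℓ'E, h.1 _ hℓ⟩)) hℓ'Y
  · exact hℓ'Y hℓY
  · exact hℓY hℓ'Y
  · exact h.2 _ (Or.inl (Or.inr ⟨hℓ'E, h.1 _ hℓ⟩)) hℓ'Y

lemma of_satEpos_subset (h : r.ReductActive Φ Y) {Θ : Set (Lit V)}
    (hsurv : ∀ ℓ ∈ r.eneg, ℓ ∉ Θ) (hΘ : r.satEpos Y ⊆ Θ) : r.ReductActive Θ Y := by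
  refine ⟨hsurv, ?_⟩
  rintro m ((hm | ⟨hmE, hmΘ⟩) | hm) hmY
  · exact h.2 m (Or.inl (Or.inl hm)) hmY
  · exact hmΘ (hΘ ⟨hmE, hmY⟩)
  · exact h.2 m (Or.inr hm) hmY

end ReductActive

end ERule

def twin (Y : Set V) (S : Set (Lit V)) : Set V := symmDiff Y (Lit.atom '' S)

section Twin

variable {A Y H K M' : Set V} {S : Set (Lit V)}

lemma not_sat_twin (hS : ∀ ℓ ∈ S, ℓ.sat Y) {ℓ : Lit V} (hℓ : ℓ ∈ S) : ¬ ℓ.sat (twin Y S) := by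
  simp [twin, Lit.sat_symmDiff, hS ℓ hℓ, Set.mem_image_of_mem _ hℓ]

lemma sat_twin_iff {ℓ : Lit V} (hℓ : ℓ.atom ∉ Lit.atom '' S) : ℓ.sat (twin Y S) ↔ ℓ.sat Y := by
  simp [twin, Lit.sat_symmDiff, hℓ]

lemma twin_subset (hY : Y ⊆ A) (hS : ∀ ℓ ∈ S, ℓ.atom ∈ A) : twin Y S ⊆ A := by
  rintro a (⟨ha, -⟩ | ⟨⟨ℓ, hℓ, rfl⟩, -⟩)
  exacts [hY ha, hS ℓ hℓ]

lemma nonempty_of_twin_ne (h : twin Y S ≠ Y) : S.Nonempty := by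
  contrapose! h
  simp [twin, h]

/-- Choices for the atoms outside `H ∩ Y`; the atoms of `H ∩ Y` are chosen together once `Y \ H`
and one of them hold, or freely once a literal of `S` fails; the literals of `S` are all true
or all false. -/
def twinProgram (A Y H : Set V) (S : Set (Lit V)) : Set (Rule V) :=
  (fun w => Rule.choice w ∅ ∅) '' (A \ (H ∩ Y)) ∪
  Set.image2 (fun w h => Rule.choice w (insert h (Y \ H)) ∅) (H ∩ Y) (H ∩ Y) ∪
  Set.image2 (fun w ℓ => Rule.choice w ∅ {ℓ}) (H ∩ Y) S ∪
  Set.image2 Rule.implies S S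

lemma twinProgram_wf (hY : Y ⊆ A) (hS : ∀ ℓ ∈ S, ℓ.atom ∈ A) :
    ∀ q ∈ twinProgram A Y H S, q.wf A := by
  rintro q (((⟨w, hw, rfl⟩ | ⟨w, hw, h, hh, rfl⟩) | ⟨w, hw, ℓ, hℓ, rfl⟩) | ⟨ℓ, hℓ, ℓ', hℓ', rfl⟩)
  · exact ⟨by simpa [Rule.choice] using hw.1, by simp [Rule.choice],
      by simpa [Rule.choice, Lit.atom] using hw.1⟩
  · exact ⟨by simpa [Rule.choice] using hY hw.2,
      Set.insert_subset (hY hh.2) (Set.sdiff_subset.trans hY),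
      by simpa [Rule.choice, Lit.atom] using hY hw.2⟩
  · exact ⟨by simpa [Rule.choice] using hY hw.2, by simp [Rule.choice],
      by simpa [Rule.choice, Lit.atom] using ⟨hY hw.2, hS ℓ hℓ⟩⟩
  · exact ⟨by simp [Rule.implies], by simp [Rule.implies],
      by simpa [Rule.implies] using ⟨hS ℓ hℓ, hS ℓ' hℓ'⟩⟩

lemma sat_twinProgram (hS : ∀ ℓ ∈ S, ℓ.sat Y) (hK : K = Y ∨ K = twin Y S) :
    ∀ q ∈ twinProgram A Y H S, q.sat K := by
  rintro q (((⟨w, -, rfl⟩ | ⟨w, -, h, -, rfl⟩) | ⟨w, -, ℓ, -, rfl⟩) | ⟨ℓ, hℓ, ℓ', hℓ', rfl⟩)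
  iterate 3 exact Rule.sat_choice _ _ _ _
  rw [Rule.sat_implies]
  rcases hK with rfl | rfl
  · exact fun _ => hS ℓ' hℓ'
  · exact fun h => absurd h (not_sat_twin hS hℓ)

lemma eq_or_eq_twin_of_sat_twinProgram (hS : ∀ ℓ ∈ S, ℓ.sat Y)
    (hagree : ∀ a ∉ Lit.atom '' S, a ∈ K ↔ a ∈ Y) (hK : ∀ q ∈ twinProgram A Y H S, q.sat K) :
    K = Y ∨ K = twin Y S := by
  have hall : ∀ ℓ ∈ S, ∀ ℓ' ∈ S, ℓ.sat K → ℓ'.sat K := fun ℓ hℓ ℓ' hℓ' =>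
    Rule.sat_implies.mp (hK _ (Or.inr ⟨ℓ, hℓ, ℓ', hℓ', rfl⟩))
  by_cases hsome : ∃ ℓ ∈ S, ℓ.sat K
  · obtain ⟨ℓ, hℓ, hℓK⟩ := hsome
    left
    ext a
    by_cases ha : a ∈ Lit.atom '' S
    · obtain ⟨ℓ', hℓ', rfl⟩ := ha
      exact (Lit.sat_iff_sat_iff K Y ℓ').mp (iff_of_true (hall ℓ hℓ ℓ' hℓ' hℓK) (hS ℓ' hℓ'))
    · exact hagree a ha
  · simp only [not_exists, not_and] at hsome
    right
    ext a
    by_cases ha : a ∈ Lit.atom '' S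
    · obtain ⟨ℓ', hℓ', rfl⟩ := ha
      exact (Lit.sat_iff_sat_iff K _ ℓ').mp
        (iff_of_false (hsome ℓ' hℓ') (not_sat_twin hS hℓ'))
    · rw [hagree a ha]
      simp [twin, Set.mem_symmDiff, ha]

lemma twin_subset_of_redSat_twinProgram (hA : twin Y S ⊆ A) (hS : ∀ ℓ ∈ S, ℓ.sat Y)
    (hne : S.Nonempty) (hred : ∀ q ∈ twinProgram A Y H S, q.redSat (twin Y S) M') :
    twin Y S ⊆ M' := by
  intro w hw
  obtain ⟨ℓ, hℓ⟩ := hne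
  by_cases hwH : w ∈ H ∩ Y
  · refine Rule.redSat_choice.mp (hred _ (Or.inl (Or.inr ⟨w, hwH, ℓ, hℓ, rfl⟩))) hw ?_ (by simp)
    simpa using not_sat_twin hS hℓ
  · exact Rule.redSat_choice.mp (hred _ (Or.inl (Or.inl (Or.inl ⟨w, ⟨hA hw, hwH⟩, rfl⟩))))
      hw (by simp) (by simp)

lemma diff_subset_of_redSat_twinProgram (hY : Y ⊆ A)
    (hred : ∀ q ∈ twinProgram A Y H S, q.redSat Y M') : Y \ H ⊆ M' := fun w hw =>
  Rule.redSat_choice.mp (hred _ (Or.inl (Or.inl (Or.inl ⟨w, ⟨hY hw.1, fun h => hw.2 h.1⟩, rfl⟩))))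
    hw.1 (by simp) (by simp)

lemma inter_subset_of_redSat_twinProgram (hred : ∀ q ∈ twinProgram A Y H S, q.redSat Y M')
    (hX : Y \ H ⊆ M') {h : V} (hh : h ∈ H ∩ Y) (hhM : h ∈ M') : H ∩ Y ⊆ M' := fun w hw =>
  Rule.redSat_choice.mp (hred _ (Or.inl (Or.inl (Or.inr ⟨w, hw, h, hh, rfl⟩))))
    hw.2 (by simp) (Set.insert_subset hhM hX)

lemma redSat_twinProgram_diff (hS : ∀ ℓ ∈ S, ℓ.sat Y) :
    ∀ q ∈ twinProgram A Y H S, q.redSat Y (Y \ H) := by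
  rintro q (((⟨w, hw, rfl⟩ | ⟨w, -, h, hh, rfl⟩) | ⟨w, -, ℓ, hℓ, rfl⟩) | ⟨ℓ, -, ℓ', hℓ', rfl⟩)
  · exact Rule.redSat_choice.mpr fun hwY _ _ => ⟨hwY, fun hwH => hw.2 ⟨hwH, hwY⟩⟩
  · exact Rule.redSat_choice.mpr fun _ _ hp => absurd hh.1 (hp (Set.mem_insert _ _)).2
  · exact Rule.redSat_choice.mpr fun _ hn => absurd (hS ℓ hℓ) (hn ℓ rfl)
  · exact fun hn => absurd (hS ℓ' hℓ') (hn ℓ' (by simp [Rule.implies]))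

end Twin

def litsOf (A : Set V) : Set (Lit V) := {ℓ | ℓ.atom ∈ A}

/-- The only guess `Θ ⊆ litsOf A` for which `M` is `Θ`-compatible w.r.t. `litsOf A`. -/
def guessOf (A : Set V) (M : Set (Set V)) : Set (Lit V) := {ℓ | ℓ.atom ∈ A ∧ ∃ J ∈ M, ¬ ℓ.sat J}

lemma sat_of_notMem_guessOf {A J : Set V} {M : Set (Set V)} {ℓ : Lit V} (hℓ : ℓ.atom ∈ A)
    (hℓM : ℓ ∉ guessOf A M) (hJ : J ∈ M) : ℓ.sat J := by
  by_contra h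
  exact hℓM ⟨hℓ, J, hJ, h⟩

lemma compatible_guessOf {A : Set V} {M : Set (Set V)} (hM : M.Nonempty) :
    compatible (litsOf A) (guessOf A M) M :=
  ⟨hM, fun _ hℓ => hℓ.2, fun _ hℓ _ hJ => sat_of_notMem_guessOf hℓ.1 hℓ.2 hJ⟩

lemma ERule.ReductActive.guessOf_twin {r : ERule V} {Φ : Set (Lit V)} {A Y : Set V}
    (h : r.ReductActive Φ Y) (hA : ∀ ℓ ∈ r.epos, ℓ.atom ∈ A) :
    r.ReductActive (guessOf A {Y, twin Y (r.satEpos Y)}) Y := by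
  refine h.of_satEpos_subset ?_ fun ℓ hℓ =>
    ⟨hA ℓ hℓ.1, _, Or.inr rfl, not_sat_twin (fun _ h => h.2) hℓ⟩
  rintro ℓ hℓ ⟨-, J, rfl | rfl, hJ⟩
  · exact hJ (h.sat_of_mem_eneg hℓ)
  · exact hJ ((sat_twin_iff (h.atom_notMem_satEpos hℓ)).mpr (h.sat_of_mem_eneg hℓ))

namespace ERule

/-- `⊥ ← ¬ not ℓ`: rules out guesses without `not ℓ`. -/
def forceIn (ℓ : Lit V) : ERule V := ⟨∅, ∅, ∅, ∅, {ℓ}⟩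

/-- `⊥ ← not ℓ`: rules out guesses with `not ℓ`. -/
def forceOut (ℓ : Lit V) : ERule V := ⟨∅, ∅, ∅, {ℓ}, ∅⟩

lemma reduct_forceOut {ℓ : Lit V} {Θ : Set (Lit V)} (hℓ : ℓ ∉ Θ) :
    (forceOut ℓ).reduct Θ = Rule.force ℓ := by
  simp [forceOut, reduct, Rule.force, hℓ]

end ERule

@[simp] lemma Rule.toERule_reduct (q : Rule V) (Θ : Set (Lit V)) : q.toERule.reduct Θ = q := by
  simp [Rule.toERule, ERule.reduct]

namespace ELP

/-- The plain rules `G` together with constraints that force the guess `Θ ⊆ F`. -/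
def pinned (A : Set V) (F Θ : Set (Lit V)) (G : Set (Rule V)) : ELP V :=
  ⟨A, F, ERule.forceIn '' Θ ∪ ERule.forceOut '' (F \ Θ) ∪ Rule.toERule '' G⟩

variable {A : Set V} {F Θ : Set (Lit V)} {G : Set (Rule V)}

lemma pinned_wf (hF : ∀ ℓ ∈ F, ℓ.atom ∈ A) (hΘ : Θ ⊆ F) (hG : ∀ q ∈ G, q.wf A) :
    (pinned A F Θ G).wf := by
  refine ⟨hF, ?_⟩
  rintro re ((⟨ℓ, hℓ, rfl⟩ | ⟨ℓ, hℓ, rfl⟩) | ⟨q, hq, rfl⟩)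
  · simpa [ERule.wf, ERule.forceIn, pinned] using hΘ hℓ
  · simpa [ERule.wf, ERule.forceOut, pinned] using hℓ.1
  · obtain ⟨h1, h2, h3⟩ := hG q hq
    exact ⟨h1, h2, h3, by simp [Rule.toERule], by simp [Rule.toERule]⟩

lemma eq_of_isCWVwrt_union_pinned {P : ELP V} {Θ' : Set (Lit V)} {M : Set (Set V)}
    (hE : P.E ⊆ F) (hΘ : Θ ⊆ F) (h : (P.union (pinned A F Θ G)).isCWVwrt Θ' M) : Θ' = Θ := by
  obtain ⟨hΘ', hM, ⟨J, hJ⟩, hviol, hsat⟩ := h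
  have hEF : P.E ∪ F = F := Set.union_eq_self_of_subset_left hE
  have hJmod : ((P.union (pinned A F Θ G)).eReduct Θ').model J := by
    rw [hM] at hJ
    exact hJ.2.1
  ext ℓ
  constructor
  · intro hℓ'
    by_contra hℓ
    have hF : ℓ ∈ F := by simpa [union, pinned, hEF] using hΘ' hℓ'
    obtain ⟨a, ha, -⟩ := hJmod (ERule.reduct (ERule.forceOut ℓ) Θ')
      ⟨_, Or.inr (Or.inl (Or.inr ⟨ℓ, ⟨hF, hℓ⟩, rfl⟩)), by simp [ERule.forceOut], rfl⟩
      ⟨by simp [ERule.forceOut, ERule.reduct], by simp [ERule.forceOut, ERule.reduct, hℓ']⟩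
    simp [ERule.forceOut, ERule.reduct] at ha
  · intro hℓ
    by_contra hℓ'
    have hrule := hJmod (ERule.reduct (ERule.forceIn ℓ) Θ')
      ⟨_, Or.inr (Or.inl (Or.inl ⟨ℓ, hℓ, rfl⟩)), by simpa [ERule.forceIn] using hℓ', rfl⟩
    have hflip : ℓ.flip.sat J := by
      simpa [ERule.forceIn, ERule.reduct, Rule.sat] using hrule
    exact (Lit.sat_flip J ℓ).mp hflip
      (hsat ℓ ⟨by simpa [union, pinned, hEF] using hΘ hℓ, hℓ'⟩ J hJ)

lemma strongELPCWVEq.symm {P₁ P₂ : ELP V} (h : P₁.strongELPCWVEq P₂) : P₂.strongELPCWVEq P₁ :=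
  fun Q hQ M => (h Q hQ M).symm

lemma AS_union_pinned_of_strongELPCWVEq {P₁ P₂ : ELP V} {M : Set (Set V)}
    (h : P₁.strongELPCWVEq P₂) (hwf : (pinned A F Θ G).wf) (h₁ : P₁.E ⊆ F) (h₂ : P₂.E ⊆ F)
    (hΘ : Θ ⊆ F) (hM : compatible F Θ M)
    (hAS : ((P₁.union (pinned A F Θ G)).eReduct Θ).AS = M) :
    ((P₂.union (pinned A F Θ G)).eReduct Θ).AS = M := by
  have hcwv : (P₁.union (pinned A F Θ G)).isCWV M := ⟨Θ, hΘ.trans Set.subset_union_right,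
    hAS.symm, by simpa [union, pinned, Set.union_eq_self_of_subset_left h₁] using hM⟩
  obtain ⟨Θ', hΘ'⟩ := (h _ hwf M).mp hcwv
  obtain rfl := eq_of_isCWVwrt_union_pinned h₂ hΘ hΘ'
  exact hΘ'.2.1.symm


variable {E : Set (Lit V)} {R₀ : Set (ERule V)}

lemma mem_eReduct_union_pinned {q : Rule V} :
    q ∈ (((ELP.mk A E R₀).union (pinned A F Θ G)).eReduct Θ).R ↔
      (∃ re ∈ R₀, (∀ ℓ ∈ re.eneg, ℓ ∉ Θ) ∧ q = re.reduct Θ) ∨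
        (∃ ℓ ∈ F \ Θ, q = Rule.force ℓ) ∨ q ∈ G := by
  simp only [eReduct, union, pinned, Set.mem_ofPred_eq, Set.mem_union, Set.mem_image]
  constructor
  · rintro ⟨re, hre | ((⟨ℓ, hℓ, rfl⟩ | ⟨ℓ, hℓ, rfl⟩) | ⟨q, hq, rfl⟩), hsurv, rfl⟩
    · exact Or.inl ⟨re, hre, hsurv, rfl⟩
    · exact absurd hℓ (hsurv ℓ (by simp [ERule.forceIn]))
    · exact Or.inr (Or.inl ⟨ℓ, hℓ, ERule.reduct_forceOut hℓ.2⟩)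
    · exact Or.inr (Or.inr (by simpa using hq))
  · rintro (⟨re, hre, hsurv, rfl⟩ | ⟨ℓ, hℓ, rfl⟩ | hq)
    · exact ⟨re, Or.inl hre, hsurv, rfl⟩
    · exact ⟨_, Or.inr (Or.inl (Or.inr ⟨ℓ, hℓ, rfl⟩)), by simp [ERule.forceOut],
        (ERule.reduct_forceOut hℓ.2).symm⟩
    · exact ⟨_, Or.inr (Or.inr ⟨q, hq, rfl⟩), by simp [Rule.toERule], by simp⟩

lemma forall_mem_eReduct_union_pinned {p : Rule V → Prop} :
    (∀ q ∈ (((ELP.mk A E R₀).union (pinned A F Θ G)).eReduct Θ).R, p q) ↔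
      (∀ re ∈ R₀, (∀ ℓ ∈ re.eneg, ℓ ∉ Θ) → p (re.reduct Θ)) ∧
        (∀ ℓ ∈ F \ Θ, p (Rule.force ℓ)) ∧ ∀ q ∈ G, p q := by
  simp only [mem_eReduct_union_pinned, or_imp, forall_and, forall_exists_index, and_imp]
  refine and_congr ⟨fun h re hre hs => h _ re hre hs rfl, fun h _ re hre hs hq => hq ▸ h re hre hs⟩
    (and_congr ⟨fun h ℓ hℓ => h _ ℓ hℓ rfl, fun h _ ℓ hℓ hq => hq ▸ h ℓ hℓ⟩ Iff.rfl)

lemma model_eReduct_union_pinned_iff {K : Set V} :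
    (((ELP.mk A E R₀).union (pinned A F Θ G)).eReduct Θ).model K ↔
      (∀ re ∈ R₀, (∀ ℓ ∈ re.eneg, ℓ ∉ Θ) → (re.reduct Θ).sat K) ∧
        (∀ ℓ ∈ F \ Θ, ℓ.sat K) ∧ ∀ q ∈ G, q.sat K := by
  simpa only [Program.model, Rule.sat_force] using forall_mem_eReduct_union_pinned (p := Rule.sat K)

lemma redModel_eReduct_union_pinned_iff {X Y : Set V} :
    (((ELP.mk A E R₀).union (pinned A F Θ G)).eReduct Θ).redModel Y X ↔
      (∀ re ∈ R₀, (∀ ℓ ∈ re.eneg, ℓ ∉ Θ) → (re.reduct Θ).redSat Y X) ∧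
        (∀ ℓ ∈ F \ Θ, ℓ.sat Y) ∧ ∀ q ∈ G, q.redSat Y X := by
  simpa only [Program.redModel, Rule.redSat_force] using
    forall_mem_eReduct_union_pinned (p := Rule.redSat Y X)

end ELP

lemma AS_eReduct_union_pinned_twinProgram {A Y H : Set V} {E S Θ : Set (Lit V)}
    {R₀ : Set (ERule V)} (hΘ : Θ = guessOf A {Y, twin Y S}) (hYA : Y ⊆ A)
    (hSA : ∀ ℓ ∈ S, ℓ.atom ∈ A) (hS : ∀ ℓ ∈ S, ℓ.sat Y)
    (hmodel : ∀ K ∈ ({Y, twin Y S} : Set (Set V)), ∀ re ∈ R₀, (∀ ℓ ∈ re.eneg, ℓ ∉ Θ) →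
      (re.reduct Θ).sat K)
    (hmin : ∀ M' ⊆ Y, (∀ re ∈ R₀, (∀ ℓ ∈ re.eneg, ℓ ∉ Θ) → (re.reduct Θ).redSat Y M') →
      (∀ q ∈ twinProgram A Y H S, q.redSat Y M') → Y ⊆ M') :
    (((ELP.mk A E R₀).union (ELP.pinned A (litsOf A) Θ (twinProgram A Y H S))).eReduct Θ).AS =
      {Y, twin Y S} := by
  have hA : (((ELP.mk A E R₀).union
      (ELP.pinned A (litsOf A) Θ (twinProgram A Y H S))).eReduct Θ).A = A := by
    simp [ELP.union, ELP.eReduct, ELP.pinned]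
  ext K
  constructor
  · rintro ⟨hKA, hK, -⟩
    rw [hA] at hKA
    obtain ⟨-, hforce, hG⟩ := ELP.model_eReduct_union_pinned_iff.mp hK
    refine eq_or_eq_twin_of_sat_twinProgram hS (fun a ha => ?_) hG
    by_cases haA : a ∈ A
    · have hYK : ∀ ℓ : Lit V, ℓ.atom = a → ℓ.sat Y → ℓ.sat K := by
        rintro ℓ rfl hℓ
        refine hforce ℓ ⟨haA, fun hℓΘ => ?_⟩
        rw [hΘ] at hℓΘ
        obtain ⟨-, J, rfl | rfl, hJ⟩ := hℓΘ
        exacts [hJ hℓ, hJ ((sat_twin_iff ha).mpr hℓ)]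
      exact ⟨fun haK => by_contra fun haY => hYK (.neg a) rfl haY haK, hYK (.pos a) rfl⟩
    · exact iff_of_false (fun h => haA (hKA h)) (fun h => haA (hYA h))
  · intro hK
    refine ⟨?_, ELP.model_eReduct_union_pinned_iff.mpr ⟨hmodel K hK, fun ℓ hℓ =>
      sat_of_notMem_guessOf hℓ.1 (hΘ ▸ hℓ.2) hK, sat_twinProgram hS hK⟩, ?_⟩
    · rw [hA]
      rcases hK with rfl | rfl
      exacts [hYA, twin_subset hYA hSA]
    rintro ⟨M', ⟨hM'K, hKM'⟩, hred⟩
    obtain ⟨hred₀, -, hredG⟩ := ELP.redModel_eReduct_union_pinned_iff.mp hred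
    refine hKM' ?_
    by_cases hKY : K = Y
    · subst hKY
      exact hmin M' hM'K hred₀ hredG
    · obtain rfl : K = twin Y S := hK.resolve_left hKY
      exact twin_subset_of_redSat_twinProgram (twin_subset hYA hSA) hS
        (nonempty_of_twin_ne hKY) hredG

lemma ELP.AS_union_pinned_twinProgram_of_strongELPCWVEq {P₁ P₂ : ELP V} {A Y H : Set V}
    {S Θ : Set (Lit V)} (h : P₁.strongELPCWVEq P₂) (hΘ : Θ = guessOf A {Y, twin Y S})
    (hYA : Y ⊆ A) (hSA : ∀ ℓ ∈ S, ℓ.atom ∈ A) (h₁ : P₁.E ⊆ litsOf A) (h₂ : P₂.E ⊆ litsOf A)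
    (hAS : ((P₁.union (pinned A (litsOf A) Θ (twinProgram A Y H S))).eReduct Θ).AS =
      {Y, twin Y S}) :
    ((P₂.union (pinned A (litsOf A) Θ (twinProgram A Y H S))).eReduct Θ).AS = {Y, twin Y S} := by
  subst hΘ
  exact AS_union_pinned_of_strongELPCWVEq h
    (pinned_wf (fun _ h => h) (fun _ h => h.1) (twinProgram_wf hYA hSA)) h₁ h₂
    (fun _ h => h.1) (compatible_guessOf ⟨Y, Or.inl rfl⟩) hAS

namespace ERule

variable {A : Set V} {E Φ : Set (Lit V)} {r : ERule V}

lemma atom_mem_of_mem_epos (hwf : (ELP.mk A E {r}).wf) {ℓ : Lit V} (hℓ : ℓ ∈ r.epos) :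
    ℓ.atom ∈ A :=
  hwf.1 ℓ ((hwf.2 r rfl).2.2.2.1 hℓ)

lemma sat_reduct_of_strongELPCWVEq (hwf : (ELP.mk A E {r}).wf)
    (heq : (ELP.mk A E {r}).strongELPCWVEq (ELP.mk A E ∅)) (hsurv : ∀ ℓ ∈ r.eneg, ℓ ∉ Φ)
    {J : Set V} (hJA : J ⊆ A) : (r.reduct Φ).sat J := by
  rintro ⟨hB, hneg⟩
  by_contra hH
  have hact : r.ReductActive Φ J := ⟨hsurv, hneg⟩
  have hEA : ∀ ℓ ∈ E, ℓ.atom ∈ A := hwf.1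
  have hepos : ∀ ℓ ∈ r.epos, ℓ.atom ∈ A := fun _ => atom_mem_of_mem_epos hwf
  set S := r.satEpos J
  set Θ := guessOf A {J, twin J S} with hΘ
  have hAS₀ : (((ELP.mk A E ∅).union
      (ELP.pinned A (litsOf A) Θ (twinProgram A J r.head S))).eReduct Θ).AS = {J, twin J S} :=
    AS_eReduct_union_pinned_twinProgram hΘ hJA (fun ℓ hℓ => hepos ℓ hℓ.1) (fun _ h => h.2)
      (by simp) fun M' _ _ hG a ha =>
        diff_subset_of_redSat_twinProgram hJA hG ⟨ha, fun haH => hH ⟨a, haH, ha⟩⟩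
  have hAS := ELP.AS_union_pinned_twinProgram_of_strongELPCWVEq heq.symm hΘ hJA
    (fun ℓ hℓ => hepos ℓ hℓ.1) hEA hEA hAS₀
  have hJ : J ∈ (((ELP.mk A E {r}).union
      (ELP.pinned A (litsOf A) Θ (twinProgram A J r.head S))).eReduct Θ).AS := hAS ▸ Or.inl rfl
  have hactΘ := hact.guessOf_twin hepos
  exact hH ((ELP.model_eReduct_union_pinned_iff.mp hJ.2.1).1 r rfl hactΘ.1 ⟨hB, hactΘ.2⟩)

lemma redSat_reduct_of_strongELPCWVEq (hwf : (ELP.mk A E {r}).wf)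
    (heq : (ELP.mk A E {r}).strongELPCWVEq (ELP.mk A E ∅)) (hsurv : ∀ ℓ ∈ r.eneg, ℓ ∉ Φ)
    {X Y : Set V} (hXY : X ⊆ Y) (hYA : Y ⊆ A) : (r.reduct Φ).redSat Y X := by
  intro hneg hB
  by_contra hH
  have hact : r.ReductActive Φ Y := ⟨hsurv, hneg⟩
  have hBY : r.opos ⊆ Y \ r.head := fun b hb => ⟨hXY (hB hb), fun hbH => hH ⟨b, hbH, hB hb⟩⟩
  have hEA : ∀ ℓ ∈ E, ℓ.atom ∈ A := hwf.1
  have hepos : ∀ ℓ ∈ r.epos, ℓ.atom ∈ A := fun _ => atom_mem_of_mem_epos hwf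
  have hSA : ∀ ℓ ∈ r.satEpos Y, ℓ.atom ∈ A := fun ℓ hℓ => hepos ℓ hℓ.1
  set S := r.satEpos Y
  set Θ := guessOf A {Y, twin Y S} with hΘ
  have hactΘ := hact.guessOf_twin hepos
  obtain ⟨h, hh, hhY⟩ :=
    sat_reduct_of_strongELPCWVEq hwf heq hsurv hYA ⟨hBY.trans Set.sdiff_subset, hneg⟩
  have hASr : (((ELP.mk A E {r}).union
      (ELP.pinned A (litsOf A) Θ (twinProgram A Y r.head S))).eReduct Θ).AS = {Y, twin Y S} := by
    refine AS_eReduct_union_pinned_twinProgram hΘ hYA hSA (fun _ h => h.2) ?_ ?_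
    · rintro K hK re rfl hs
      rcases hK with rfl | rfl
      exacts [sat_reduct_of_strongELPCWVEq hwf heq hs hYA,
        sat_reduct_of_strongELPCWVEq hwf heq hs (twin_subset hYA hSA)]
    · intro M' hM'Y hr hG
      have hX := diff_subset_of_redSat_twinProgram hYA hG
      obtain ⟨h', hh', hh'M⟩ := hr r rfl hactΘ.1 hactΘ.2 (hBY.trans hX)
      have hHY := inter_subset_of_redSat_twinProgram hG hX ⟨hh', hM'Y hh'M⟩ hh'M
      intro y hy
      by_cases hyH : y ∈ r.head
      exacts [hHY ⟨hyH, hy⟩, hX ⟨hy, hyH⟩]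
  have hAS := ELP.AS_union_pinned_twinProgram_of_strongELPCWVEq heq hΘ hYA hSA hEA hEA hASr
  have hY : Y ∈ (((ELP.mk A E ∅).union
      (ELP.pinned A (litsOf A) Θ (twinProgram A Y r.head S))).eReduct Θ).AS := hAS ▸ Or.inl rfl
  refine hY.2.2 ⟨Y \ r.head, ⟨Set.sdiff_subset, fun hYX => (hYX hhY).2 hh⟩,
    ELP.redModel_eReduct_union_pinned_iff.mpr ⟨by simp, fun ℓ hℓ => ?_,
      redSat_twinProgram_diff fun _ h => h.2⟩⟩
  exact sat_of_notMem_guessOf hℓ.1 hℓ.2 (Or.inl rfl)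

end ERule

lemma realizableIn_of_consistentGuess {A : Set V} {E Φ : Set (Lit V)} {I : Set (Set V)}
    (hE : ∀ ℓ ∈ E, ℓ.atom ∈ A) (hΦE : Φ ⊆ E) (hcons : consistentGuess E Φ)
    (hI : ∀ J ⊆ A, J ∈ I) : realizableIn E Φ I := by
  set J₀ : Set V := {a | Lit.pos a ∈ E \ Φ}
  set J₁ : Set V := J₀ ∪ {a | Lit.neg a ∈ Φ}
  have hJ₀A : J₀ ⊆ A := fun a ha => hE _ ha.1
  have hJ₁A : J₁ ⊆ A := Set.union_subset hJ₀A fun a ha => hE _ (hΦE ha)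
  refine ⟨{J₀, J₁}, ?_, ⟨_, Or.inl rfl⟩, ?_, ?_⟩
  · rintro J (rfl | rfl)
    exacts [hI _ hJ₀A, hI _ hJ₁A]
  · rintro (a | a) hℓ
    exacts [⟨J₀, Or.inl rfl, fun ha => ha.2 hℓ⟩, ⟨J₁, Or.inr rfl, fun ha => ha (Or.inr hℓ)⟩]
  · rintro (a | a) hℓ J hJ
    · rcases hJ with rfl | rfl
      exacts [hℓ, Or.inl hℓ]
    · have ha : a ∉ J₀ := fun ha => (hcons a ha.1 hℓ.1).elim ha.2 hℓ.2
      rcases hJ with rfl | rfl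
      exacts [ha, fun ha' => ha'.elim ha hℓ.2]

lemma Program.AS_eq_of_subset {P P' : Program V} (hA : P'.A = P.A) (hR : P.R ⊆ P'.R)
    (hnew : ∀ q ∈ P'.R, q ∉ P.R → ∀ Y, q.sat Y ∧ ∀ X ⊆ Y, q.redSat Y X) : P'.AS = P.AS := by
  have hmodel : ∀ Y, P'.model Y ↔ P.model Y := fun Y =>
    ⟨fun h q hq => h q (hR hq), fun h q hq =>
      (em (q ∈ P.R)).elim (h q) fun hqP => (hnew q hq hqP Y).1⟩
  have hred : ∀ Y, ∀ X ⊆ Y, P'.redModel Y X ↔ P.redModel Y X := fun Y X hXY =>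
    ⟨fun h q hq => h q (hR hq), fun h q hq =>
      (em (q ∈ P.R)).elim (h q) fun hqP => (hnew q hq hqP Y).2 X hXY⟩
  ext Y
  simp only [AS, answerSet, Set.mem_ofPred_eq, hA, hmodel]
  exact and_congr_right' (and_congr_right' (not_congr
    (exists_congr fun X => and_congr_right fun hX => hred Y X hX.1)))

lemma consistentGuess_inter_of_compatible {E E' Θ : Set (Lit V)} {M : Set (Set V)}
    (h : compatible (E ∪ E') Θ M) : consistentGuess E (Θ ∩ E) := by
  intro a hp hn
  by_contra hc
  simp only [not_or, Set.mem_inter_iff, hp, hn, and_true] at hc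
  obtain ⟨J, hJ⟩ := h.1
  exact h.2.2 (.neg a) ⟨Or.inl hn, hc.2⟩ J hJ (h.2.2 (.pos a) ⟨Or.inl hp, hc.1⟩ J hJ)

namespace ERule

variable {A : Set V} {E : Set (Lit V)} {r : ERule V}

lemma AS_eReduct_union_eq {Q : ELP V} {Θ : Set (Lit V)}
    (hr : (∀ ℓ ∈ r.eneg, ℓ ∉ Θ) → ∀ Y, (r.reduct Θ).sat Y ∧ ∀ X ⊆ Y, (r.reduct Θ).redSat Y X) :
    (((ELP.mk A E {r}).union Q).eReduct Θ).AS = (((ELP.mk A E ∅).union Q).eReduct Θ).AS := by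
  refine Program.AS_eq_of_subset rfl ?_ ?_
  · rintro q ⟨re, hre | hre, hs, rfl⟩
    exacts [absurd hre (Set.notMem_empty _), ⟨re, Or.inr hre, hs, rfl⟩]
  · rintro q ⟨re, rfl | hre, hs, rfl⟩ hq
    exacts [hr hs, absurd ⟨re, Or.inr hre, hs, rfl⟩ hq]

lemma SEfun_eq_of_strongELPCWVEq (hwf : (ELP.mk A E {r}).wf)
    (heq : (ELP.mk A E {r}).strongELPCWVEq (ELP.mk A E ∅)) {Φ : Set (Lit V)} (hΦE : Φ ⊆ E)
    (hcons : consistentGuess E Φ) :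
    (ELP.mk A E {r}).SEfun Φ = {p : Set V × Set V | p.1 ⊆ p.2 ∧ p.2 ⊆ A} := by
  have hmodel : ∀ J ⊆ A, ((ELP.mk A E {r}).eReduct Φ).model J := by
    rintro J hJ q ⟨re, rfl, hs, rfl⟩
    exact sat_reduct_of_strongELPCWVEq hwf heq hs hJ
  ext ⟨X, Y⟩
  refine ⟨fun ⟨_, hXY, hYA, _⟩ => ⟨hXY, hYA⟩, fun ⟨hXY, hYA⟩ => ⟨?_, hXY, hYA, hmodel Y hYA, ?_⟩⟩
  · exact realizableIn_of_consistentGuess hwf.1 hΦE hcons fun J hJ => ⟨hJ, hmodel J hJ⟩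
  · rintro q ⟨re, rfl, hs, rfl⟩
    exact redSat_reduct_of_strongELPCWVEq hwf heq hs hXY hYA

lemma strongELPCWVEq_of_SEfun_eq (hwf : (ELP.mk A E {r}).wf)
    (hSE : ∀ Φ ⊆ E, consistentGuess E Φ →
      (ELP.mk A E {r}).SEfun Φ = {p : Set V × Set V | p.1 ⊆ p.2 ∧ p.2 ⊆ A}) :
    (ELP.mk A E {r}).strongELPCWVEq (ELP.mk A E ∅) := by
  have hrwf : r.wf A E := hwf.2 r rfl
  have hAS : ∀ (Q : ELP V) Θ M, compatible (E ∪ Q.E) Θ M →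
      (((ELP.mk A E {r}).union Q).eReduct Θ).AS = (((ELP.mk A E ∅).union Q).eReduct Θ).AS := by
    refine fun Q Θ M hM => AS_eReduct_union_eq fun hs Y => ?_
    have hSEΘ := hSE (Θ ∩ E) Set.inter_subset_right (consistentGuess_inter_of_compatible hM)
    have hpair : ∀ X ⊆ Y, (X ∩ A, Y ∩ A) ∈ (ELP.mk A E {r}).SEfun (Θ ∩ E) := fun X hX => by
      rw [hSEΘ]
      exact ⟨Set.inter_subset_inter_left A hX, Set.inter_subset_right⟩
    have hmem : r.reduct Θ ∈ ((ELP.mk A E {r}).eReduct (Θ ∩ E)).R :=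
      ⟨r, rfl, fun ℓ hℓ h => hs ℓ hℓ h.1, (reduct_inter_of_epos_subset hrwf.2.2.2.1).symm⟩
    have hwfΘ := wf_reduct hrwf hwf.1 Θ
    exact ⟨(Rule.sat_inter hwfΘ).mp ((hpair Y subset_rfl).2.2.2.1 _ hmem),
      fun X hX => Rule.redSat_of_redSat_inter hwfΘ ((hpair X hX).2.2.2.2 _ hmem)⟩
  intro Q _ M
  constructor
  · rintro ⟨Θ, hΘ, hM, hcomp⟩
    exact ⟨Θ, hΘ, hM.trans (hAS Q Θ M hcomp), hcomp⟩
  · rintro ⟨Θ, hΘ, hM, hcomp⟩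
    exact ⟨Θ, hΘ, hM.trans (hAS Q Θ M hcomp).symm, hcomp⟩

end ERule

/-- An ELP rule `r` is tautological (the single-rule ELP is strongly
equivalent to the empty program) iff `𝒮ℰ_{P_r}(Φ) = 𝒮_𝒜` for every consistent guess
`Φ ⊆ ℰ`, where `𝒮_𝒜` is the set of all pairs `(X,Y)` with `X ⊆ Y ⊆ 𝒜`. -/
theorem stmt12 {V : Type} (A : Set V) (E : Set (Lit V)) (r : ERule V)
    (hwf : (ELP.mk A E {r}).wf) :
    ELP.strongELPCWVEq (ELP.mk A E {r}) (ELP.mk A E ∅) ↔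
      ∀ Φ ⊆ E, consistentGuess E Φ →
        (ELP.mk A E {r}).SEfun Φ = {p : Set V × Set V | p.1 ⊆ p.2 ∧ p.2 ⊆ A} :=
  ⟨fun heq _ hΦE hcons => r.SEfun_eq_of_strongELPCWVEq hwf heq hΦE hcons,
    r.strongELPCWVEq_of_SEfun_eq hwf⟩
end

section
/- A standard rule r of the form A ← B, ¬C, ¬¬D (with A, B, C, D sets of atoms) is tautological if and only if (α) A ∩ B ≠ ∅, or (β) B ∩ C ≠ ∅, or (γ) C ∩ D ≠ ∅. -/
variable {V : Type}

/-!
A rule `r` is tautological exactly when every pair `X ⊆ Y` is an SE-model of it, i.e. when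
`X ⊨ r^Y` for all `X ⊆ Y`. Such a rule can be added to any program without changing its
answer sets. Conversely, if `X ⊭ r^Y`, Turner's context (the facts `X` together with the rules
`p ← q` for `p, q ∈ Y \ X`) separates `{r}` from the empty program: `Y` is an answer set of
exactly one of the two extensions. For `r = A ← B, ¬C, ¬¬D` the pair `(B, B ∪ D)` is an
SE-model of `r` only if one of `A ∩ B`, `B ∩ C`, `C ∩ D` is nonempty, and each of these three
conditions makes every pair an SE-model.
-/

namespace Rule

theorem sat_iff_redSat_self {r : Rule V} {I : Set V} : r.sat I ↔ r.redSat I I := by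
  rw [sat, redSat, and_imp, imp.swap]

end Rule

namespace Program

theorem model_iff_redModel_self {P : Program V} {I : Set V} : P.model I ↔ P.redModel I I := by
  simp only [model, redModel, Rule.sat_iff_redSat_self]

@[simp]
theorem model_union {P Q : Program V} {I : Set V} :
    (P.union Q).model I ↔ P.model I ∧ Q.model I := by
  simp only [model, union, Set.mem_union, or_imp, forall_and]

@[simp]
theorem redModel_union {P Q : Program V} {Y X : Set V} :
    (P.union Q).redModel Y X ↔ P.redModel Y X ∧ Q.redModel Y X := by
  simp only [redModel, union, Set.mem_union, or_imp, forall_and]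

@[simp]
theorem model_mk_singleton {𝒜 I : Set V} {r : Rule V} : (mk 𝒜 {r}).model I ↔ r.sat I := by
  simp [model]

@[simp]
theorem redModel_mk_singleton {𝒜 Y X : Set V} {r : Rule V} :
    (mk 𝒜 {r}).redModel Y X ↔ r.redSat Y X := by
  simp [redModel]

@[simp]
theorem model_mk_empty {𝒜 I : Set V} : (mk 𝒜 ∅).model I := by
  simp [model]

@[simp]
theorem redModel_mk_empty {𝒜 Y X : Set V} : (mk 𝒜 ∅).redModel Y X := by
  simp [redModel]

theorem strongEq_singleton_empty_of_forall_redSat {𝒜 : Set V} {r : Rule V}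
    (hr : ∀ X Y, X ⊆ Y → r.redSat Y X) : strongEq (mk 𝒜 {r}) (mk 𝒜 ∅) := by
  intro P _
  ext M
  have hM : r.sat M := Rule.sat_iff_redSat_self.mpr (hr M M le_rfl)
  simp only [AS, Set.mem_ofPred_eq, answerSet, model_union, redModel_union, model_mk_singleton,
    redModel_mk_singleton, model_mk_empty, redModel_mk_empty, hM, true_and]
  refine and_congr Iff.rfl (and_congr Iff.rfl (not_congr (exists_congr fun M' => ?_)))
  exact and_congr_right fun hM' => and_iff_right (hr M' M hM'.subset)

def seContext (X Y : Set V) : Program V :=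
  ⟨Y, (fun x => Rule.mk {x} ∅ ∅) '' X ∪ Set.image2 (fun p u => Rule.mk {p} {u} ∅) (Y \ X) (Y \ X)⟩

theorem seContext_wf {X Y : Set V} (hXY : X ⊆ Y) : (seContext X Y).wf := by
  rintro q (⟨x, hx, rfl⟩ | ⟨p, hp, u, hu, rfl⟩)
  · exact ⟨by simpa [seContext] using hXY hx, by simp, by simp⟩
  · exact ⟨by simpa [seContext] using hp.1, by simpa [seContext] using hu.1, by simp⟩

theorem seContext_redModel_iff {X Y Z M : Set V} :
    (seContext X Y).redModel Z M ↔ X ⊆ M ∧ ∀ p ∈ Y \ X, ∀ u ∈ Y \ X, u ∈ M → p ∈ M := by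
  simp only [redModel, seContext, Set.mem_union, or_imp, forall_and, Set.forall_mem_image,
    Set.forall_mem_image2, Rule.redSat]
  simp [Set.subset_def]

theorem answerSet_union_seContext_iff {P : Program V} {X Y : Set V} (hXY : X ⊆ Y) :
    (P.union (seContext X Y)).answerSet Y ↔ P.model Y ∧ ¬ (X ⊂ Y ∧ P.redModel Y X) := by
  have hmod : (seContext X Y).model Y :=
    model_iff_redModel_self.mpr (seContext_redModel_iff.mpr ⟨hXY, fun _ hp _ _ _ => hp.1⟩)
  have hmin : (∃ M ⊂ Y, (P.union (seContext X Y)).redModel Y M) ↔ X ⊂ Y ∧ P.redModel Y X := by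
    simp only [redModel_union]
    constructor
    · rintro ⟨M, hMY, hP, hctx⟩
      obtain ⟨hXM, hfill⟩ := seContext_redModel_iff.mp hctx
      obtain rfl : M = X := by
        refine Set.Subset.antisymm (fun u huM => ?_) hXM
        by_contra huX
        refine hMY.not_subset fun y hy => ?_
        by_cases hyX : y ∈ X
        exacts [hXM hyX, hfill y ⟨hy, hyX⟩ u ⟨hMY.subset huM, huX⟩ huM]
      exact ⟨hMY, hP⟩
    · rintro ⟨hXY', hP⟩
      exact ⟨X, hXY', hP, seContext_redModel_iff.mpr ⟨le_rfl, fun _ _ u hu huX => absurd huX hu.2⟩⟩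
  refine (and_iff_right (show Y ⊆ (P.union (seContext X Y)).A from Set.subset_union_right)).trans ?_
  rw [model_union, and_iff_left hmod, hmin]

theorem forall_redSat_of_strongEq_singleton_empty {𝒜 : Set V} {r : Rule V}
    (h : strongEq (mk 𝒜 {r}) (mk 𝒜 ∅)) : ∀ X Y, X ⊆ Y → r.redSat Y X := by
  have key : ∀ X Y, X ⊆ Y → (r.sat Y ∧ ¬ (X ⊂ Y ∧ r.redSat Y X) ↔ ¬ X ⊂ Y) := by
    intro X Y hXY
    have := Set.ext_iff.mp (h (seContext X Y) (seContext_wf hXY)) Y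
    simpa [AS, answerSet_union_seContext_iff hXY] using this
  intro X Y hXY
  have hY : r.sat Y := ((key Y Y le_rfl).mpr (lt_irrefl Y)).1
  by_cases hXY' : X ⊂ Y
  · by_contra hX
    exact (key X Y hXY).mp ⟨hY, fun h => hX h.2⟩ hXY'
  · obtain rfl := hXY.eq_or_ssubset.resolve_right hXY'
    exact Rule.sat_iff_redSat_self.mp hY

theorem strongEq_singleton_empty_iff {𝒜 : Set V} {r : Rule V} :
    strongEq (mk 𝒜 {r}) (mk 𝒜 ∅) ↔ ∀ X Y, X ⊆ Y → r.redSat Y X :=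
  ⟨forall_redSat_of_strongEq_singleton_empty, strongEq_singleton_empty_of_forall_redSat⟩

end Program

theorem Lit.forall_not_sat_image_union_iff {C D I : Set V} :
    (∀ ℓ ∈ Lit.pos '' C ∪ Lit.neg '' D, ¬ ℓ.sat I) ↔ Disjoint C I ∧ D ⊆ I := by
  simp only [Set.mem_union, or_imp, forall_and, Set.forall_mem_image, Lit.sat, not_not,
    Set.disjoint_left, Set.subset_def]

namespace Rule

theorem redSat_mk_iff {A B C D Y X : Set V} :
    (Rule.mk A B (Lit.pos '' C ∪ Lit.neg '' D)).redSat Y X ↔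
      (Disjoint C Y ∧ D ⊆ Y → B ⊆ X → (A ∩ X).Nonempty) := by
  rw [redSat, Lit.forall_not_sat_image_union_iff]
  rfl

theorem forall_redSat_mk_iff {A B C D : Set V} :
    (∀ X Y, X ⊆ Y → (Rule.mk A B (Lit.pos '' C ∪ Lit.neg '' D)).redSat Y X) ↔
      ((A ∩ B).Nonempty ∨ (B ∩ C).Nonempty ∨ (C ∩ D).Nonempty) := by
  simp only [redSat_mk_iff]
  constructor
  · intro h
    by_contra! hempty
    obtain ⟨hAB, hBC, hCD⟩ := hempty
    have hCY : Disjoint C (B ∪ D) := Set.disjoint_union_right.mpr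
      ⟨(Set.disjoint_iff_inter_eq_empty.mpr hBC).symm, Set.disjoint_iff_inter_eq_empty.mpr hCD⟩
    simpa [hAB] using h B (B ∪ D) Set.subset_union_left ⟨hCY, Set.subset_union_right⟩ le_rfl
  · rintro (⟨a, haA, haB⟩ | ⟨b, hbB, hbC⟩ | ⟨c, hcC, hcD⟩) X Y hXY ⟨hCY, hDY⟩ hBX
    · exact ⟨a, haA, hBX haB⟩
    · exact absurd (hXY (hBX hbB)) (Set.disjoint_left.mp hCY hbC)
    · exact absurd (hDY hcD) (Set.disjoint_left.mp hCY hcC)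

end Rule

theorem stmt13_general {V : Type} (𝒜 A B C D : Set V) :
    Program.strongEq
        (Program.mk 𝒜 {Rule.mk A B (Lit.pos '' C ∪ Lit.neg '' D)})
        (Program.mk 𝒜 ∅) ↔
      ((A ∩ B).Nonempty ∨ (B ∩ C).Nonempty ∨ (C ∩ D).Nonempty) := by
  rw [Program.strongEq_singleton_empty_iff, Rule.forall_redSat_mk_iff]

/-- A standard rule `A ← B, ¬C, ¬¬D` is tautological iff
`A ∩ B ≠ ∅`, `B ∩ C ≠ ∅`, or `C ∩ D ≠ ∅`. -/
theorem stmt13 {V : Type} (𝒜 A B C D : Set V)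
    (hA : A ⊆ 𝒜) (hB : B ⊆ 𝒜) (hC : C ⊆ 𝒜) (hD : D ⊆ 𝒜) :
    Program.strongEq
        (Program.mk 𝒜 {Rule.mk A B (Lit.pos '' C ∪ Lit.neg '' D)})
        (Program.mk 𝒜 ∅) ↔
      ((A ∩ B).Nonempty ∨ (B ∩ C).Nonempty ∨ (C ∩ D).Nonempty) :=
  stmt13_general 𝒜 A B C D
end

section
/- An ELP rule r of the form A ← B, ¬C, not D, not ¬E, ¬not F, ¬not ¬G (with A, B, C, D, E, F, G sets of atoms) is tautological if and only if (a) A ∩ B ≠ ∅, or (b) B ∩ (C ∪ G) ≠ ∅, or (c) C ∩ F ≠ ∅, or (d) D ∩ F ≠ ∅, or (e) E ∩ G ≠ ∅, or (f) F ∩ G ≠ ∅. -/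
variable {V : Type}

/-!
If one of the six intersections is nonempty, every surviving reduct of the rule has the shape
`H ← P, ¬N, ¬¬K` with `H ∩ P`, `P ∩ N` or `N ∩ K` nonempty; such a rule holds in every SE-pair
`(X, Y)`, so adding it changes no answer set of any reduct.

Conversely, let all six be empty and put `W = B ∪ E ∪ F`, `K = A ∩ F`. A candidate world view
equal to the interval `[F, W]` determines its guess; that guess keeps the rule (every
`J ∈ [F, W]` contains `F` and misses `G`), sends every `not d` to `⊤` (witness `F`) and every
`not ¬e` to `⊤` (witness `F ∪ {e}`), leaving `ρ = A ← B, ¬(C ∪ G), ¬¬F`.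
Adding a suitable plain program separates the two at `B ∪ F`: if `K = ∅`, its answer sets are
`[F, W]` and `B ∪ F` violates `ρ`; otherwise its answer sets together with `ρ` are `[F, W]`, while
without `ρ` the set `(B ∪ F) \ K` is a smaller reduct model at `B ∪ F`.
-/

namespace Rule

/-- The rule `H ← P, ¬N, ¬¬K`. -/
def ofSets (H P N K : Set V) : Rule V := ⟨H, P, Lit.pos '' N ∪ Lit.neg '' K⟩

def IsTautology (r : Rule V) : Prop := ∀ ⦃X Y : Set V⦄, X ⊆ Y → r.redSat Y X

theorem sat_iff_redSat {r : Rule V} {Y : Set V} : r.sat Y ↔ r.redSat Y Y :=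
  ⟨fun h hneg hpos => h ⟨hpos, hneg⟩, fun h ⟨hpos, hneg⟩ => h hneg hpos⟩

theorem redSat_ofSets {H P N K X Y : Set V} :
    (ofSets H P N K).redSat Y X ↔ (Disjoint N Y → K ⊆ Y → P ⊆ X → (H ∩ X).Nonempty) := by
  have hneg : (∀ ℓ ∈ Lit.pos '' N ∪ Lit.neg '' K, ¬ ℓ.sat Y) ↔ Disjoint N Y ∧ K ⊆ Y := by
    simp [Set.disjoint_left, Set.subset_def, Lit.sat, or_imp, forall_and]
  simp only [redSat, ofSets, hneg, and_imp, Set.Nonempty, Set.mem_inter_iff]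

theorem isTautology_ofSets {H P N K : Set V}
    (h : (H ∩ P).Nonempty ∨ (P ∩ N).Nonempty ∨ (N ∩ K).Nonempty) :
    (ofSets H P N K).IsTautology := by
  intro X Y hXY
  rw [redSat_ofSets]
  intro hNY hKY hPX
  rcases h with ⟨a, haH, haP⟩ | ⟨a, haP, haN⟩ | ⟨a, haN, haK⟩
  · exact ⟨a, haH, hPX haP⟩
  · exact absurd (hXY (hPX haP)) (Set.disjoint_left.1 hNY haN)
  · exact absurd (hKY haK) (Set.disjoint_left.1 hNY haN)

theorem not_sat_ofSets {H P N K Y : Set V} (hHY : Disjoint H Y) (hPY : P ⊆ Y)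
    (hNY : Disjoint N Y) (hKY : K ⊆ Y) : ¬ (ofSets H P N K).sat Y := fun h => by
  obtain ⟨a, haH, haY⟩ := redSat_ofSets.1 (sat_iff_redSat.1 h) hNY hKY hPY
  exact Set.disjoint_left.1 hHY haH haY

theorem wf_ofSets {H P N K A : Set V} (hH : H ⊆ A) (hP : P ⊆ A) (hN : N ⊆ A) (hK : K ⊆ A) :
    (ofSets H P N K).wf A := by
  refine ⟨hH, hP, ?_⟩
  rintro _ (⟨a, ha, rfl⟩ | ⟨a, ha, rfl⟩)
  exacts [hN ha, hK ha]

theorem toERule_reduct_s14 (r : Rule V) (Φ : Set (Lit V)) : r.toERule.reduct Φ = r := by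
  simp [toERule, ERule.reduct]

end Rule

namespace Program

theorem model_iff_redModel {P : Program V} {M : Set V} : P.model M ↔ P.redModel M M :=
  forall₂_congr fun _ _ => Rule.sat_iff_redSat

theorem answerSet_iff {P : Program V} {M : Set V} :
    P.answerSet M ↔ M ⊆ P.A ∧ P.model M ∧ ∀ X ⊆ M, P.redModel M X → M ⊆ X := by
  refine and_congr_right fun _ => and_congr_right fun _ => ?_
  simp only [not_exists, not_and, Set.ssubset_def]
  exact forall_congr' fun X => ⟨fun h hXM hX => by_contra fun hMX => h ⟨hXM, hMX⟩ hX,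
    fun h hX hred => hX.2 (h hX.1 hred)⟩

theorem answerSet.not_redModel_diff_singleton {P : Program V} {M : Set V} (h : P.answerSet M)
    {x : V} (hx : x ∈ M) : ¬ P.redModel M (M \ {x}) :=
  fun hred => h.2.2 ⟨M \ {x}, Set.sdiff_singleton_ssubset.2 hx, hred⟩

theorem redModel_insert {A : Set V} {r : Rule V} {R : Set (Rule V)} {Y X : Set V} :
    (⟨A, insert r R⟩ : Program V).redModel Y X ↔
      r.redSat Y X ∧ (⟨A, R⟩ : Program V).redModel Y X :=
  Set.forall_mem_insert

theorem redModel_union_s14 {A : Set V} {R S : Set (Rule V)} {Y X : Set V} :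
    (⟨A, R ∪ S⟩ : Program V).redModel Y X ↔
      (⟨A, R⟩ : Program V).redModel Y X ∧ (⟨A, S⟩ : Program V).redModel Y X :=
  forall₂_or_left

theorem AS_union_of_isTautology {A : Set V} {S R : Set (Rule V)}
    (hS : ∀ s ∈ S, s.IsTautology) : (⟨A, S ∪ R⟩ : Program V).AS = (⟨A, R⟩ : Program V).AS := by
  have hred : ∀ {X M : Set V}, X ⊆ M →
      ((⟨A, S ∪ R⟩ : Program V).redModel M X ↔ (⟨A, R⟩ : Program V).redModel M X) :=
    fun hXM => redModel_union_s14.trans (and_iff_right fun s hs => hS s hs hXM)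
  ext M
  simp only [AS, Set.mem_ofPred_eq, answerSet_iff, model_iff_redModel]
  refine and_congr_right fun _ => and_congr (hred subset_rfl) ?_
  exact forall₂_congr fun X hXM => imp_congr_left (hred hXM)

def toELP (P : Program V) : ELP V := ⟨P.A, ∅, Rule.toERule '' P.R⟩

theorem wf.toELP {P : Program V} (h : P.wf) : P.toELP.wf := by
  refine ⟨fun _ h => absurd h (Set.notMem_empty _), ?_⟩
  rintro _ ⟨r, hr, rfl⟩
  obtain ⟨hH, hP, hN⟩ := h r hr
  exact ⟨hH, hP, hN, Set.empty_subset _, Set.empty_subset _⟩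

end Program

/-- The ELP rule `A ← B, ¬C, not D, not ¬E, ¬not F, ¬not ¬G`. -/
def ERule.ofSets (A B C D E F G : Set V) : ERule V :=
  ⟨A, B, Lit.pos '' C, Lit.pos '' D ∪ Lit.neg '' E, Lit.pos '' F ∪ Lit.neg '' G⟩

theorem ERule.reduct_ofSets (A B C D E F G : Set V) (Φ : Set (Lit V)) :
    (ERule.ofSets A B C D E F G).reduct Φ =
      Rule.ofSets A B (C ∪ {d ∈ D | Lit.pos d ∉ Φ} ∪ G) ({e ∈ E | Lit.neg e ∉ Φ} ∪ F) := by
  simp only [ERule.reduct, ERule.ofSets, Rule.ofSets, Rule.mk.injEq, true_and, Set.image_union,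
    Set.image_image, Lit.flip]
  ext (a | a) <;> simp

def forcedGuess (E : Set (Lit V)) (M : Set (Set V)) : Set (Lit V) :=
  {ℓ ∈ E | ∃ J ∈ M, ¬ ℓ.sat J}

theorem compatible_forcedGuess {E : Set (Lit V)} {M : Set (Set V)} (hM : M.Nonempty) :
    compatible E (forcedGuess E M) M :=
  ⟨hM, fun _ hℓ => hℓ.2, fun _ hℓ J hJ => by_contra fun h => hℓ.2 ⟨hℓ.1, J, hJ, h⟩⟩

theorem compatible.eq_forcedGuess {E Φ : Set (Lit V)} {M : Set (Set V)} (h : compatible E Φ M)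
    (hΦ : Φ ⊆ E) : Φ = forcedGuess E M := by
  ext ℓ
  refine ⟨fun hℓ => ⟨hΦ hℓ, h.2.1 ℓ hℓ⟩, fun ⟨hℓE, J, hJ, hℓJ⟩ => ?_⟩
  by_contra hℓΦ
  exact hℓJ (h.2.2 ℓ ⟨hℓE, hℓΦ⟩ J hJ)

namespace ELP

theorem eReduct_union (P Q : ELP V) (Φ : Set (Lit V)) :
    (P.union Q).eReduct Φ = ⟨P.A ∪ Q.A, (P.eReduct Φ).R ∪ (Q.eReduct Φ).R⟩ := by
  simp only [eReduct, union, Program.mk.injEq, true_and]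
  ext q
  simp only [Set.mem_union, Set.mem_ofPred_eq]
  constructor
  · rintro ⟨r, hr | hr, hk, rfl⟩
    exacts [Or.inl ⟨r, hr, hk, rfl⟩, Or.inr ⟨r, hr, hk, rfl⟩]
  · rintro (⟨r, hr, hk, rfl⟩ | ⟨r, hr, hk, rfl⟩)
    exacts [⟨r, Or.inl hr, hk, rfl⟩, ⟨r, Or.inr hr, hk, rfl⟩]

theorem eReduct_toELP_R (P : Program V) (Φ : Set (Lit V)) : (P.toELP.eReduct Φ).R = P.R := by
  ext q
  constructor
  · rintro ⟨_, ⟨r, hr, rfl⟩, -, rfl⟩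
    rwa [Rule.toERule_reduct_s14]
  · exact fun hq => ⟨q.toERule, ⟨q, hq, rfl⟩, fun _ h => absurd h (Set.notMem_empty _),
      (Rule.toERule_reduct_s14 q Φ).symm⟩

theorem eReduct_singleton_R {A : Set V} {E Φ : Set (Lit V)} {r : ERule V}
    (hr : ∀ ℓ ∈ r.eneg, ℓ ∉ Φ) : ((⟨A, E, {r}⟩ : ELP V).eReduct Φ).R = {r.reduct Φ} := by
  ext q
  simp only [eReduct, Set.mem_singleton_iff, Set.mem_ofPred_eq, exists_eq_left]
  exact and_iff_right hr

theorem eReduct_empty_R (A : Set V) (E Φ : Set (Lit V)) :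
    ((⟨A, E, ∅⟩ : ELP V).eReduct Φ).R = ∅ := by
  simp [eReduct]

theorem eReduct_singleton_union_toELP {A : Set V} {E Φ : Set (Lit V)} {r : ERule V}
    {R : Set (Rule V)} (hr : ∀ ℓ ∈ r.eneg, ℓ ∉ Φ) :
    (ELP.union ⟨A, E, {r}⟩ (⟨A, R⟩ : Program V).toELP).eReduct Φ = ⟨A, insert (r.reduct Φ) R⟩ := by
  rw [eReduct_union, eReduct_toELP_R, eReduct_singleton_R hr, Set.singleton_union]
  exact congrArg (Program.mk · _) (Set.union_self A)

theorem eReduct_empty_union_toELP (A : Set V) (E Φ : Set (Lit V)) (R : Set (Rule V)) :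
    (ELP.union ⟨A, E, ∅⟩ (⟨A, R⟩ : Program V).toELP).eReduct Φ = ⟨A, R⟩ := by
  rw [eReduct_union, eReduct_toELP_R, eReduct_empty_R, Set.empty_union]
  exact congrArg (Program.mk · _) (Set.union_self A)

theorem cwvEq_of_AS_eReduct_eq {P₁ P₂ : ELP V} (hE : P₁.E = P₂.E)
    (h : ∀ Φ, (P₁.eReduct Φ).AS = (P₂.eReduct Φ).AS) : cwvEq P₁ P₂ := by
  intro M
  constructor
  · rintro ⟨Φ, hΦ, hM, hc⟩
    exact ⟨Φ, hE ▸ hΦ, hM.trans (h Φ), hE ▸ hc⟩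
  · rintro ⟨Φ, hΦ, hM, hc⟩
    exact ⟨Φ, hE ▸ hΦ, hM.trans (h Φ).symm, hE ▸ hc⟩

theorem not_cwvEq_of_AS_eReduct_forcedGuess {P₁ P₂ : ELP V} {E : Set (Lit V)}
    {M : Set (Set V)} (hE₁ : P₁.E = E) (hE₂ : P₂.E = E) (hM : M.Nonempty)
    (h₁ : (P₁.eReduct (forcedGuess E M)).AS = M) (h₂ : (P₂.eReduct (forcedGuess E M)).AS ≠ M) :
    ¬ cwvEq P₁ P₂ := by
  intro h
  obtain ⟨Φ, hΦ, hM₂, hc⟩ :=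
    (h M).1 ⟨_, fun _ hℓ => hE₁ ▸ hℓ.1, h₁.symm, hE₁ ▸ compatible_forcedGuess hM⟩
  rw [hE₂] at hΦ hc
  exact h₂ (hc.eq_forcedGuess hΦ ▸ hM₂.symm)

theorem strongELPCWVEq_of_isTautology {P : ELP V}
    (h : ∀ Φ, ∀ r ∈ P.R, (∀ ℓ ∈ r.eneg, ℓ ∉ Φ) → (r.reduct Φ).IsTautology) :
    strongELPCWVEq P ⟨P.A, P.E, ∅⟩ := by
  refine fun Q _ => cwvEq_of_AS_eReduct_eq rfl fun Φ => ?_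
  rw [eReduct_union, eReduct_union, eReduct_empty_R, Set.empty_union]
  refine Program.AS_union_of_isTautology ?_
  rintro _ ⟨r, hr, hk, rfl⟩
  exact h Φ r hr hk

end ELP

/-- The constraints and choices alone have the answer sets `[F, B ∪ E ∪ F]`; the rules with head
in `K` make all of `K` derivable in the reduct at every such `J` except `B ∪ F`. -/
def testProgram (K B E F : Set V) : Set (Rule V) :=
  (fun f => Rule.ofSets ∅ ∅ {f} ∅) '' F ∪
  (fun x => Rule.ofSets {x} ∅ ∅ {x}) '' ((B ∪ E ∪ F) \ K) ∪
  Set.image2 (fun k b => Rule.ofSets {k} ∅ {b} ∅) K B ∪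
  Set.image2 (fun k t => Rule.ofSets {k} {t} ∅ ∅) K (K ∪ E \ (B ∪ F))

section testProgram

variable {𝒜 K B E F X Y : Set V}

theorem wf_testProgram (hKF : K ⊆ F) (hW : B ∪ E ∪ F ⊆ 𝒜) :
    (⟨𝒜, testProgram K B E F⟩ : Program V).wf := by
  have hB : B ⊆ 𝒜 := fun b hb => hW (Or.inl (Or.inl hb))
  have hE : E ⊆ 𝒜 := fun e he => hW (Or.inl (Or.inr he))
  have hF : F ⊆ 𝒜 := fun f hf => hW (Or.inr hf)
  have h0 : (∅ : Set V) ⊆ 𝒜 := Set.empty_subset 𝒜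
  rintro _ (((⟨f, hf, rfl⟩ | ⟨x, hx, rfl⟩) | ⟨k, hk, b, hb, rfl⟩) | ⟨k, hk, t, ht, rfl⟩)
  · exact Rule.wf_ofSets h0 h0 (Set.singleton_subset_iff.2 (hF hf)) h0
  · have hx𝒜 := Set.singleton_subset_iff.2 (hW hx.1)
    exact Rule.wf_ofSets hx𝒜 h0 h0 hx𝒜
  · exact Rule.wf_ofSets (Set.singleton_subset_iff.2 (hF (hKF hk))) h0
      (Set.singleton_subset_iff.2 (hB hb)) h0
  · refine Rule.wf_ofSets (Set.singleton_subset_iff.2 (hF (hKF hk)))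
      (Set.singleton_subset_iff.2 ?_) h0 h0
    rcases ht with ht | ht
    exacts [hF (hKF ht), hE ht.1]

theorem redModel_testProgram_iff :
    (⟨𝒜, testProgram K B E F⟩ : Program V).redModel Y X ↔
      F ⊆ Y ∧ Y ∩ ((B ∪ E ∪ F) \ K) ⊆ X ∧ (¬ B ⊆ Y → K ⊆ X) ∧
        ((X ∩ (K ∪ E \ (B ∪ F))).Nonempty → K ⊆ X) := by
  simp only [Program.redModel, testProgram, Set.mem_union, forall₂_or_left, Set.forall_mem_image,
    Set.forall_mem_image2, Rule.redSat_ofSets]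
  simp [Set.subset_def, Set.Nonempty]
  grind

theorem model_testProgram_iff (hKF : K ⊆ F) :
    (⟨𝒜, testProgram K B E F⟩ : Program V).model Y ↔ F ⊆ Y := by
  rw [Program.model_iff_redModel, redModel_testProgram_iff]
  exact ⟨And.left, fun hFY =>
    ⟨hFY, Set.inter_subset_left, fun _ => hKF.trans hFY, fun _ => hKF.trans hFY⟩⟩

theorem redModel_testProgram_diff_singleton (hKF : K ⊆ F) (hFY : F ⊆ Y) {x : V}
    (hx : x ∉ B ∪ E ∪ F) : (⟨𝒜, testProgram K B E F⟩ : Program V).redModel Y (Y \ {x}) := by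
  have hK : K ⊆ Y \ {x} := fun k hk =>
    ⟨hFY (hKF hk), fun hkx => hx (Or.inr ((Set.mem_singleton_iff.1 hkx) ▸ hKF hk))⟩
  rw [redModel_testProgram_iff]
  exact ⟨hFY, fun y ⟨hyY, hyW, _⟩ => ⟨hyY, fun hyx => hx (Set.mem_singleton_iff.1 hyx ▸ hyW)⟩,
    fun _ => hK, fun _ => hK⟩

theorem redModel_testProgram_sdiff :
    (⟨𝒜, testProgram K B E F⟩ : Program V).redModel (B ∪ F) ((B ∪ F) \ K) := by
  rw [redModel_testProgram_iff]
  refine ⟨Set.subset_union_right, fun y ⟨hyY, _, hyK⟩ => ⟨hyY, hyK⟩,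
    fun hB => absurd Set.subset_union_left hB, ?_⟩
  rintro ⟨y, ⟨hyY, hyK⟩, hyK' | ⟨-, hyBF⟩⟩
  exacts [absurd hyK' hyK, absurd hyY hyBF]

theorem eq_of_redModel_testProgram (hKF : K ⊆ F) (hBK : Disjoint B K) (hYW : Y ⊆ B ∪ E ∪ F)
    (h : (⟨𝒜, testProgram K B E F⟩ : Program V).redModel Y X) (hYX : ¬ Y ⊆ X) :
    Y = B ∪ F ∧ B ⊆ X ∧ Disjoint K X := by
  obtain ⟨hFY, hchoice, hgate, htrigger⟩ := redModel_testProgram_iff.1 h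
  have hKX : ¬ K ⊆ X := by
    obtain ⟨y, hyY, hyX⟩ := Set.not_subset.1 hYX
    exact fun hKX => hyX (by_cases (fun hyK : y ∈ K => hKX hyK)
      (fun hyK => hchoice ⟨hyY, hYW hyY, hyK⟩))
  have hBY : B ⊆ Y := by_contra fun hBY => hKX (hgate hBY)
  have hXT : ¬ (X ∩ (K ∪ E \ (B ∪ F))).Nonempty := fun hT => hKX (htrigger hT)
  have hYBF : Y ⊆ B ∪ F := by
    intro y hyY
    by_contra hy
    have hyK : y ∉ K := fun hyK => hy (Or.inr (hKF hyK))
    have hyE : y ∈ E := by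
      rcases hYW hyY with (hyB | hyE) | hyF
      exacts [absurd (Or.inl hyB) hy, hyE, absurd (Or.inr hyF) hy]
    exact hXT ⟨y, hchoice ⟨hyY, hYW hyY, hyK⟩, Or.inr ⟨hyE, hy⟩⟩
  refine ⟨hYBF.antisymm (Set.union_subset hBY hFY),
    fun b hb => hchoice ⟨hBY hb, Or.inl (Or.inl hb), Set.disjoint_left.1 hBK hb⟩, ?_⟩
  exact Set.disjoint_left.2 fun k hk hkX => hXT ⟨k, hkX, Or.inl hk⟩

theorem not_answerSet_testProgram (hK : K.Nonempty) (hKF : K ⊆ F) :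
    ¬ (⟨𝒜, testProgram K B E F⟩ : Program V).answerSet (B ∪ F) := fun h => by
  obtain ⟨k, hk⟩ := hK
  exact ((Program.answerSet_iff.1 h).2.2 _ Set.sdiff_subset redModel_testProgram_sdiff
    (Or.inr (hKF hk))).2 hk

theorem AS_testProgram_empty (hW : B ∪ E ∪ F ⊆ 𝒜) :
    (⟨𝒜, testProgram ∅ B E F⟩ : Program V).AS = Set.Icc F (B ∪ E ∪ F) := by
  ext J
  simp only [Program.AS, Set.mem_ofPred_eq, Set.mem_Icc]
  constructor
  · intro hJ
    obtain ⟨-, hmodel, -⟩ := Program.answerSet_iff.1 hJ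
    have hFJ := (model_testProgram_iff (Set.empty_subset F)).1 hmodel
    refine ⟨hFJ, fun x hxJ => by_contra fun hxW => ?_⟩
    exact hJ.not_redModel_diff_singleton hxJ
      (redModel_testProgram_diff_singleton (Set.empty_subset F) hFJ hxW)
  · rintro ⟨hFJ, hJW⟩
    refine Program.answerSet_iff.2
      ⟨hJW.trans hW, (model_testProgram_iff (Set.empty_subset F)).2 hFJ, fun X _ hX => ?_⟩
    have hchoice := (redModel_testProgram_iff.1 hX).2.1
    rwa [Set.sdiff_empty, Set.inter_eq_left.2 hJW] at hchoice

theorem AS_insert_testProgram {A N : Set V} (hAB : Disjoint A B) (hN : Disjoint N (B ∪ F))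
    (hK : (A ∩ F).Nonempty) (hW : B ∪ E ∪ F ⊆ 𝒜) :
    (⟨𝒜, insert (Rule.ofSets A B N F) (testProgram (A ∩ F) B E F)⟩ : Program V).AS =
      Set.Icc F (B ∪ E ∪ F) := by
  have hKF : A ∩ F ⊆ F := Set.inter_subset_right
  have hrule : ∀ {Y X : Set V}, A ∩ F ⊆ X → (Rule.ofSets A B N F).redSat Y X := fun hKX =>
    Rule.redSat_ofSets.2 fun _ _ _ => hK.mono (Set.subset_inter Set.inter_subset_left hKX)
  ext J
  simp only [Program.AS, Set.mem_ofPred_eq, Set.mem_Icc]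
  constructor
  · intro hJ
    obtain ⟨-, hmodel, -⟩ := Program.answerSet_iff.1 hJ
    rw [Program.model_iff_redModel, Program.redModel_insert, ← Program.model_iff_redModel,
      model_testProgram_iff hKF] at hmodel
    have hFJ := hmodel.2
    refine ⟨hFJ, fun x hxJ => by_contra fun hxW => hJ.not_redModel_diff_singleton hxJ ?_⟩
    exact Program.redModel_insert.2 ⟨hrule fun k hk => ⟨hFJ (hKF hk), fun hkx =>
        hxW (Or.inr (Set.mem_singleton_iff.1 hkx ▸ hKF hk))⟩,
      redModel_testProgram_diff_singleton hKF hFJ hxW⟩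
  · rintro ⟨hFJ, hJW⟩
    refine Program.answerSet_iff.2 ⟨hJW.trans hW, ?_, fun X hXJ hX => by_contra fun hJX => ?_⟩
    · rw [Program.model_iff_redModel, Program.redModel_insert, ← Program.model_iff_redModel,
        model_testProgram_iff hKF]
      exact ⟨hrule (hKF.trans hFJ), hFJ⟩
    · obtain ⟨hrX, hX⟩ := Program.redModel_insert.1 hX
      obtain ⟨rfl, hBX, hKX⟩ := eq_of_redModel_testProgram hKF
        (hAB.symm.mono_right Set.inter_subset_left) hJW hX hJX
      obtain ⟨a, haA, haX⟩ := Rule.redSat_ofSets.1 hrX hN hFJ hBX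
      rcases hXJ haX with haB | haF
      exacts [Set.disjoint_left.1 hAB haA haB, Set.disjoint_left.1 hKX ⟨haA, haF⟩ haX]

end testProgram

namespace ERule

theorem ofSets_eneg_notMem_forcedGuess {ℰ : Set (Lit V)} {A B C D E F G : Set V}
    (hG : Disjoint (B ∪ E ∪ F) G) :
    ∀ ℓ ∈ (ofSets A B C D E F G).eneg, ℓ ∉ forcedGuess ℰ (Set.Icc F (B ∪ E ∪ F)) := by
  rintro _ (⟨f, hf, rfl⟩ | ⟨g, hg, rfl⟩) ⟨-, J, ⟨hFJ, hJW⟩, hJ⟩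
  · exact hJ (hFJ hf)
  · exact hJ fun hgJ => Set.disjoint_left.1 hG (hJW hgJ) hg

theorem reduct_ofSets_forcedGuess {ℰ : Set (Lit V)} {A B C D E F G : Set V}
    (hℰ : Lit.pos '' D ∪ Lit.neg '' E ⊆ ℰ) (hDF : Disjoint D F) :
    (ofSets A B C D E F G).reduct (forcedGuess ℰ (Set.Icc F (B ∪ E ∪ F))) =
      Rule.ofSets A B (C ∪ G) F := by
  have hD : {d ∈ D | Lit.pos d ∉ forcedGuess ℰ (Set.Icc F (B ∪ E ∪ F))} = ∅ :=
    Set.sep_eq_empty_iff_mem_false.2 fun d hd hdΦ => hdΦ ⟨hℰ (Or.inl ⟨d, hd, rfl⟩),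
      F, ⟨subset_rfl, Set.subset_union_right⟩, Set.disjoint_left.1 hDF hd⟩
  have hE : {e ∈ E | Lit.neg e ∉ forcedGuess ℰ (Set.Icc F (B ∪ E ∪ F))} = ∅ :=
    Set.sep_eq_empty_iff_mem_false.2 fun e he heΦ => heΦ ⟨hℰ (Or.inr ⟨e, he, rfl⟩),
      insert e F, ⟨Set.subset_insert e F, Set.insert_subset (Or.inl (Or.inr he))
        Set.subset_union_right⟩, not_not.2 (Set.mem_insert e F)⟩
  rw [reduct_ofSets, hD, hE, Set.union_empty, Set.empty_union]

end ERule

namespace ELP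

theorem strongELPCWVEq_ofSets {𝒜 : Set V} {ℰ : Set (Lit V)} {A B C D E F G : Set V}
    (h : (A ∩ B).Nonempty ∨ (B ∩ (C ∪ G)).Nonempty ∨ (C ∩ F).Nonempty ∨
      (D ∩ F).Nonempty ∨ (E ∩ G).Nonempty ∨ (F ∩ G).Nonempty) :
    strongELPCWVEq ⟨𝒜, ℰ, {ERule.ofSets A B C D E F G}⟩ ⟨𝒜, ℰ, ∅⟩ := by
  refine strongELPCWVEq_of_isTautology fun Φ r hr hk => ?_
  rw [Set.mem_singleton_iff.1 hr, ERule.reduct_ofSets] at *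
  have hF : ∀ f ∈ F, Lit.pos f ∉ Φ := fun f hf => hk _ (Or.inl ⟨f, hf, rfl⟩)
  have hG : ∀ g ∈ G, Lit.neg g ∉ Φ := fun g hg => hk _ (Or.inr ⟨g, hg, rfl⟩)
  refine Rule.isTautology_ofSets ?_
  rcases h with ⟨a, ha⟩ | ⟨b, hbB, hbC | hbG⟩ | ⟨c, hcC, hcF⟩ | ⟨d, hdD, hdF⟩ |
    ⟨e, heE, heG⟩ | ⟨f, hfF, hfG⟩
  · exact Or.inl ⟨a, ha⟩
  · exact Or.inr (Or.inl ⟨b, hbB, Or.inl (Or.inl hbC)⟩)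
  · exact Or.inr (Or.inl ⟨b, hbB, Or.inr hbG⟩)
  · exact Or.inr (Or.inr ⟨c, Or.inl (Or.inl hcC), Or.inr hcF⟩)
  · exact Or.inr (Or.inr ⟨d, Or.inl (Or.inr ⟨hdD, hF d hdF⟩), Or.inr hdF⟩)
  · exact Or.inr (Or.inr ⟨e, Or.inr heG, Or.inl ⟨heE, hG e heG⟩⟩)
  · exact Or.inr (Or.inr ⟨f, Or.inr hfG, Or.inr hfF⟩)

theorem not_strongELPCWVEq_ofSets {𝒜 : Set V} {ℰ : Set (Lit V)} {A B C D E F G : Set V}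
    (hwf : (⟨𝒜, ℰ, {ERule.ofSets A B C D E F G}⟩ : ELP V).wf) (hAB : Disjoint A B)
    (hBCG : Disjoint B (C ∪ G)) (hCF : Disjoint C F) (hDF : Disjoint D F) (hEG : Disjoint E G)
    (hFG : Disjoint F G) :
    ¬ strongELPCWVEq ⟨𝒜, ℰ, {ERule.ofSets A B C D E F G}⟩ ⟨𝒜, ℰ, ∅⟩ := by
  obtain ⟨hℰ, hr⟩ := hwf
  obtain ⟨-, hB, -, hDEℰ, hFGℰ⟩ := hr _ rfl
  have hW : B ∪ E ∪ F ⊆ 𝒜 := Set.union_subset (Set.union_subset hB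
    fun e he => hℰ _ (hDEℰ (Or.inr ⟨e, he, rfl⟩))) fun f hf => hℰ _ (hFGℰ (Or.inl ⟨f, hf, rfl⟩))
  have hG : Disjoint (B ∪ E ∪ F) G :=
    ((hBCG.mono_right Set.subset_union_right).union_left hEG).union_left hFG
  have hN : Disjoint (C ∪ G) (B ∪ F) := by
    refine Disjoint.union_left (Disjoint.union_right ?_ hCF) (hG.symm.mono_right ?_)
    exacts [(hBCG.mono_right Set.subset_union_left).symm,
      Set.union_subset_union_left F Set.subset_union_left]
  have hM : (Set.Icc F (B ∪ E ∪ F)).Nonempty := ⟨F, subset_rfl, Set.subset_union_right⟩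
  have hYM : B ∪ F ∈ Set.Icc F (B ∪ E ∪ F) :=
    ⟨Set.subset_union_right, Set.union_subset_union_left F Set.subset_union_left⟩
  intro h
  have hcwv := h (⟨𝒜, testProgram (A ∩ F) B E F⟩ : Program V).toELP
    (wf_testProgram Set.inter_subset_right hW).toELP
  rcases (A ∩ F).eq_empty_or_nonempty with hK | hK
  · refine not_cwvEq_of_AS_eReduct_forcedGuess (Set.union_empty ℰ) (Set.union_empty ℰ) hM
      ?_ ?_ fun M => (hcwv M).symm
    · rw [eReduct_empty_union_toELP, hK]
      exact AS_testProgram_empty hW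
    · rw [eReduct_singleton_union_toELP (ERule.ofSets_eneg_notMem_forcedGuess hG),
        ERule.reduct_ofSets_forcedGuess hDEℰ hDF]
      refine fun hAS => Rule.not_sat_ofSets ?_ Set.subset_union_left hN Set.subset_union_right
        ((hAS ▸ hYM : Program.answerSet _ _).2.1 _ (Set.mem_insert _ _))
      exact hAB.union_right (Set.disjoint_iff_inter_eq_empty.2 hK)
  · refine not_cwvEq_of_AS_eReduct_forcedGuess (Set.union_empty ℰ) (Set.union_empty ℰ) hM
      ?_ ?_ hcwv
    · rw [eReduct_singleton_union_toELP (ERule.ofSets_eneg_notMem_forcedGuess hG),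
        ERule.reduct_ofSets_forcedGuess hDEℰ hDF]
      exact AS_insert_testProgram hAB hN hK hW
    · rw [eReduct_empty_union_toELP]
      exact fun hAS => not_answerSet_testProgram hK Set.inter_subset_right (hAS ▸ hYM)

end ELP

/-- An ELP rule `A ← B, ¬C, not D, not ¬E, ¬not F, ¬not ¬G` is
tautological iff `A ∩ B ≠ ∅`, `B ∩ (C ∪ G) ≠ ∅`, `C ∩ F ≠ ∅`, `D ∩ F ≠ ∅`,
`E ∩ G ≠ ∅`, or `F ∩ G ≠ ∅`. -/
theorem stmt14 {V : Type} (𝒜 : Set V) (ℰ : Set (Lit V)) (A B C D E F G : Set V)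
    (hwf : (ELP.mk 𝒜 ℰ
        {ERule.mk A B (Lit.pos '' C) (Lit.pos '' D ∪ Lit.neg '' E)
          (Lit.pos '' F ∪ Lit.neg '' G)}).wf) :
    ELP.strongELPCWVEq
        (ELP.mk 𝒜 ℰ
          {ERule.mk A B (Lit.pos '' C) (Lit.pos '' D ∪ Lit.neg '' E)
            (Lit.pos '' F ∪ Lit.neg '' G)})
        (ELP.mk 𝒜 ℰ ∅) ↔
      ((A ∩ B).Nonempty ∨ (B ∩ (C ∪ G)).Nonempty ∨ (C ∩ F).Nonempty ∨
        (D ∩ F).Nonempty ∨ (E ∩ G).Nonempty ∨ (F ∩ G).Nonempty) := by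
  refine ⟨fun h => ?_, ELP.strongELPCWVEq_ofSets⟩
  simp only [← Set.not_disjoint_iff_nonempty_inter, ← not_and_or]
  exact fun ⟨hAB, hBCG, hCF, hDF, hEG, hFG⟩ =>
    ELP.not_strongELPCWVEq_ofSets hwf hAB hBCG hCF hDF hEG hFG h
end

section
/- A standard rule r = A ← B, ¬C, ¬¬D subsumes a non-tautological standard rule s = A' ← B', ¬C', ¬¬D' if and only if the following conditions jointly hold: (α) A ⊆ A' ∪ C', (β) B ⊆ B' ∪ D', (β') if A ∩ (A'∖C') ≠ ∅ then B ⊆ B', (γ) C ⊆ C', and (δ) D ⊆ B' ∪ D'. -/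
variable {V : Type}

/-!
Strong equivalence is characterised by SE-models `(X, Y)`, `X ⊆ Y`. If two programs have the
same ones, they agree on which `Y` are models and on which `X ⊂ Y` satisfy the reduct, so they
have the same answer sets in every context. Conversely, the context of facts `Y` makes every
model `Y` an answer set, and the context of facts `X` together with all rules `u ← v`,
`u, v ∈ Y \ X`, leaves `X` as the only possible reduct model strictly below `Y`.

So `r` subsumes `s` iff every SE-model of `r` is one of `s`, and a non-tautological `s` has
`A' ∩ B'`, `B' ∩ C'` and `C' ∩ D'` empty, since otherwise every pair is an SE-model of `s`. For
such an `s` each violated condition among (α)–(δ), witnessed by an atom `x`, gives an SE-model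
`(B' ∪ F, B' ∪ D' ∪ E)` of `r` with `E, F ⊆ {x}` that violates the reduct of `s`; conversely
(α)–(δ) transfer the SE-models of `r` to `s` directly.
-/

open Set

namespace Rule

def fact (a : V) : Rule V := ⟨{a}, ∅, ∅⟩

def imp (u v : V) : Rule V := ⟨{u}, {v}, ∅⟩

def standard (A B C D : Set V) : Rule V := ⟨A, B, Lit.pos '' C ∪ Lit.neg '' D⟩

theorem wf_mono {r : Rule V} {A A' : Set V} (h : r.wf A) (hA : A ⊆ A') : r.wf A' :=
  ⟨h.1.trans hA, h.2.1.trans hA, fun ℓ hℓ => hA (h.2.2 ℓ hℓ)⟩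

theorem wf_fact {a : V} {A : Set V} (ha : a ∈ A) : (fact a).wf A := by
  simp [wf, fact, ha]

theorem wf_imp {u v : V} {A : Set V} (hu : u ∈ A) (hv : v ∈ A) : (imp u v).wf A := by
  simp [wf, imp, hu, hv]

theorem redSat_self {r : Rule V} {I : Set V} : r.redSat I I ↔ r.sat I :=
  ⟨fun h hbody => h hbody.2 hbody.1, fun h hneg hpos => h ⟨hpos, hneg⟩⟩

theorem redSat_fact {a : V} {Y X : Set V} : (fact a).redSat Y X ↔ a ∈ X := by
  simp [redSat, fact]

theorem redSat_imp {u v : V} {Y X : Set V} : (imp u v).redSat Y X ↔ (v ∈ X → u ∈ X) := by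
  simp [redSat, imp]

theorem forall_not_sat_standard_neg {C D I : Set V} :
    (∀ ℓ ∈ (Lit.pos '' C ∪ Lit.neg '' D : Set (Lit V)), ¬ ℓ.sat I) ↔
      Disjoint C I ∧ D ⊆ I := by
  simp [or_imp, forall_and, Lit.sat, disjoint_left, subset_def]

theorem sat_standard {A B C D I : Set V} :
    (standard A B C D).sat I ↔ (B ⊆ I → Disjoint C I → D ⊆ I → (A ∩ I).Nonempty) := by
  simp only [sat, standard, forall_not_sat_standard_neg, and_imp, Set.Nonempty, mem_inter_iff]

theorem redSat_standard {A B C D Y X : Set V} :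
    (standard A B C D).redSat Y X ↔
      (Disjoint C Y → D ⊆ Y → B ⊆ X → (A ∩ X).Nonempty) := by
  simp only [redSat, standard, forall_not_sat_standard_neg, and_imp, Set.Nonempty, mem_inter_iff]

end Rule

namespace Program

/-- SE-models without the restriction `Y ⊆ 𝒜` of `Program.SE`. -/
def IsSEModel (P : Program V) (X Y : Set V) : Prop := X ⊆ Y ∧ P.model Y ∧ P.redModel Y X

theorem redModel_self {P : Program V} {I : Set V} : P.redModel I I ↔ P.model I :=
  forall₂_congr fun _ _ => Rule.redSat_self

theorem model_union_s16 {P₁ P₂ : Program V} {I : Set V} :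
    (P₁.union P₂).model I ↔ P₁.model I ∧ P₂.model I := by
  simp [model, union, or_imp, forall_and]

theorem redModel_union_s16 {P₁ P₂ : Program V} {Y X : Set V} :
    (P₁.union P₂).redModel Y X ↔ P₁.redModel Y X ∧ P₂.redModel Y X := by
  simp [redModel, union, or_imp, forall_and]

theorem wf_union {P₁ P₂ : Program V} (h₁ : P₁.wf) (h₂ : P₂.wf) : (P₁.union P₂).wf := by
  rintro r (hr | hr)
  · exact Rule.wf_mono (h₁ r hr) subset_union_left
  · exact Rule.wf_mono (h₂ r hr) subset_union_right

def facts (S : Set V) : Program V := ⟨S, Rule.fact '' S⟩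

def cycle (S : Set V) : Program V := ⟨S, image2 Rule.imp S S⟩

theorem wf_facts (S : Set V) : (facts S).wf := by
  simpa [wf, facts] using fun _ => Rule.wf_fact

theorem wf_cycle (S : Set V) : (cycle S).wf := by
  rintro _ ⟨u, hu, v, hv, rfl⟩
  exact Rule.wf_imp hu hv

theorem redModel_facts {S Y X : Set V} : (facts S).redModel Y X ↔ S ⊆ X := by
  simp [redModel, facts, Rule.redSat_fact, subset_def]

theorem redModel_cycle {S Y X : Set V} :
    (cycle S).redModel Y X ↔ ∀ u ∈ S, ∀ v ∈ S, v ∈ X → u ∈ X := by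
  simp only [redModel, cycle, forall_mem_image2, Rule.redSat_imp]

theorem model_of_strongEq {P₁ P₂ : Program V} (h : P₁.strongEq P₂) {Y : Set V}
    (hY : P₁.model Y) : P₂.model Y := by
  have hAS : Y ∈ (P₁.union (facts Y)).AS := by
    refine ⟨subset_union_right, model_union_s16.2 ⟨hY, ?_⟩, ?_⟩
    · exact redModel_self.1 (redModel_facts.2 subset_rfl)
    · rintro ⟨M, hMY, hM⟩
      exact hMY.not_subset (redModel_facts.1 (redModel_union_s16.1 hM).2)
  rw [h _ (wf_facts Y)] at hAS
  exact (model_union_s16.1 hAS.2.1).1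

/-- Every reduct model of `facts X ∪ cycle (Y \ X)` below `Y` contains `X` and either all of
`Y \ X` or none of it, so `X` is the only candidate strictly below `Y`. -/
theorem redModel_of_strongEq {P₁ P₂ : Program V} (h : P₁.strongEq P₂) {X Y : Set V}
    (hXY : X ⊆ Y) (hY : P₁.model Y) (hX : P₁.redModel Y X) : P₂.redModel Y X := by
  have hY₂ := model_of_strongEq h hY
  by_contra hX₂
  have hXY' : X ⊂ Y :=
    hXY.ssubset_of_ne fun hXeq => hX₂ (by subst hXeq; exact redModel_self.2 hY₂)
  set Q := (facts X).union (cycle (Y \ X))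
  have hQ : Q.wf := wf_union (wf_facts X) (wf_cycle (Y \ X))
  have hQX : Q.redModel Y X :=
    redModel_union_s16.2 ⟨redModel_facts.2 subset_rfl,
      redModel_cycle.2 fun _ _ _ hv hvX => (hv.2 hvX).elim⟩
  have hAS : Y ∈ (P₂.union Q).AS := by
    refine ⟨subset_union_of_subset_right (sdiff_subset_iff.1 subset_rfl : Y ⊆ Q.A) _, ?_, ?_⟩
    · refine model_union_s16.2 ⟨hY₂, redModel_self.1 (redModel_union_s16.2 ⟨?_, ?_⟩)⟩
      · exact redModel_facts.2 hXY
      · exact redModel_cycle.2 fun u hu _ _ _ => hu.1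
    · rintro ⟨M, hMY, hM⟩
      obtain ⟨hM₂, hMQ⟩ := redModel_union_s16.1 hM
      obtain ⟨hXM, hcyc⟩ := redModel_union_s16.1 hMQ
      have hMX : M ⊆ X := by
        intro m hm
        by_contra hmX
        refine hMY.not_subset fun u hu => ?_
        by_cases huX : u ∈ X
        · exact redModel_facts.1 hXM huX
        · exact redModel_cycle.1 hcyc u ⟨hu, huX⟩ m ⟨hMY.subset hm, hmX⟩ hm
      exact hX₂ ((hMX.antisymm (redModel_facts.1 hXM)) ▸ hM₂)
  rw [← h _ hQ] at hAS
  exact hAS.2.2 ⟨X, hXY', redModel_union_s16.2 ⟨hX, hQX⟩⟩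

theorem answerSet_union_iff {P₁ P₂ : Program V} (hA : P₁.A = P₂.A)
    (hSE : ∀ X Y, P₁.IsSEModel X Y ↔ P₂.IsSEModel X Y) (P : Program V) (M : Set V) :
    (P₁.union P).answerSet M ↔ (P₂.union P).answerSet M := by
  have hmod : P₁.model M ↔ P₂.model M := by
    simpa [IsSEModel, redModel_self] using hSE M M
  simp only [answerSet, model_union_s16, redModel_union_s16]
  simp only [union, hA]
  refine and_congr_right fun _ => ?_
  by_cases h₁ : P₁.model M
  · have hred : ∀ M' ⊆ M, P₁.redModel M M' ↔ P₂.redModel M M' := fun M' hM' => by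
      simpa [IsSEModel, hM', h₁, hmod.1 h₁] using hSE M' M
    simp only [h₁, hmod.1 h₁, true_and]
    exact and_congr_right fun _ => not_congr <| exists_congr fun M' =>
      and_congr_right fun hM' => and_congr_left' (hred M' hM'.subset)
  · simp only [h₁, hmod.not.1 h₁, false_and]

theorem strongEq_iff_isSEModel {P₁ P₂ : Program V} (hA : P₁.A = P₂.A) :
    P₁.strongEq P₂ ↔ ∀ X Y, P₁.IsSEModel X Y ↔ P₂.IsSEModel X Y := by
  refine ⟨fun h X Y => ?_, fun hSE P _ => Set.ext (answerSet_union_iff hA hSE P)⟩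
  have h' : P₂.strongEq P₁ := fun P hP => (h P hP).symm
  exact ⟨fun ⟨hXY, hY, hX⟩ => ⟨hXY, model_of_strongEq h hY, redModel_of_strongEq h hXY hY hX⟩,
    fun ⟨hXY, hY, hX⟩ => ⟨hXY, model_of_strongEq h' hY, redModel_of_strongEq h' hXY hY hX⟩⟩

end Program

namespace Rule

theorem tautological_iff {s : Rule V} {𝒜 : Set V} :
    Program.strongEq ⟨𝒜, {s}⟩ ⟨𝒜, ∅⟩ ↔ ∀ X Y, X ⊆ Y → s.redSat Y X := by
  rw [Program.strongEq_iff_isSEModel (P₁ := ⟨𝒜, {s}⟩) (P₂ := ⟨𝒜, ∅⟩) rfl]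
  simp only [Program.IsSEModel, Program.model, Program.redModel, mem_singleton_iff, forall_eq,
    forall_mem_empty, and_true]
  refine ⟨fun h X Y hXY => ((h X Y).2 hXY).2.2, fun h X Y => ⟨fun h' => h'.1, fun hXY => ?_⟩⟩
  exact ⟨hXY, redSat_self.1 (h Y Y subset_rfl), h X Y hXY⟩

theorem subsumes_iff {r s : Rule V} {𝒜 : Set V} :
    Program.strongEq ⟨𝒜, {r}⟩ ⟨𝒜, {r, s}⟩ ↔
      ∀ X Y, X ⊆ Y → r.sat Y → r.redSat Y X → s.redSat Y X := by
  rw [Program.strongEq_iff_isSEModel (P₁ := ⟨𝒜, {r}⟩) (P₂ := ⟨𝒜, {r, s}⟩) rfl]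
  simp only [Program.IsSEModel, Program.model, Program.redModel, mem_singleton_iff, forall_eq,
    forall_mem_insert]
  refine ⟨fun h X Y hXY hY hX => ((h X Y).1 ⟨hXY, hY, hX⟩).2.2.2, fun h X Y => ?_⟩
  refine ⟨fun ⟨hXY, hY, hX⟩ => ⟨hXY, ⟨hY, ?_⟩, hX, h X Y hXY hY hX⟩,
    fun h' => ⟨h'.1, h'.2.1.1, h'.2.2.1⟩⟩
  exact redSat_self.1 (h Y Y subset_rfl hY (redSat_self.2 hY))

section Standard

variable {A B C D A' B' C' D' : Set V}

theorem redSat_standard_of_not_disjoint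
    (h : ¬ Disjoint A B ∨ ¬ Disjoint B C ∨ ¬ Disjoint C D) {X Y : Set V} (hXY : X ⊆ Y) :
    (standard A B C D).redSat Y X := by
  rw [redSat_standard]
  intro hCY hDY hBX
  simp only [not_disjoint_iff_nonempty_inter] at h
  rcases h with ⟨a, haA, haB⟩ | ⟨c, hcB, hcC⟩ | ⟨c, hcC, hcD⟩
  · exact ⟨a, haA, hBX haB⟩
  · exact (disjoint_left.1 hCY hcC (hXY (hBX hcB))).elim
  · exact (disjoint_left.1 hCY hcC (hDY hcD)).elim

theorem disjoint_of_not_tautological {𝒜 : Set V}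
    (hs : ¬ Program.strongEq ⟨𝒜, {standard A B C D}⟩ ⟨𝒜, ∅⟩) :
    Disjoint A B ∧ Disjoint B C ∧ Disjoint C D := by
  rw [tautological_iff] at hs
  by_contra h
  simp only [not_and_or] at h
  exact hs fun _ _ => redSat_standard_of_not_disjoint h

theorem not_redSat_standard (hAB : Disjoint A B) (hBC : Disjoint B C) (hCD : Disjoint C D)
    {E F : Set V} (hCE : Disjoint C E) (hAF : Disjoint A F) :
    ¬ (standard A B C D).redSat (B ∪ D ∪ E) (B ∪ F) := by
  rw [redSat_standard]
  intro h
  have hCY : Disjoint C (B ∪ D ∪ E) :=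
    disjoint_union_right.2 ⟨disjoint_union_right.2 ⟨hBC.symm, hCD⟩, hCE⟩
  obtain ⟨a, haA, haB | haF⟩ :=
    h hCY (subset_union_right.trans subset_union_left) subset_union_left
  · exact disjoint_left.1 hAB haA haB
  · exact disjoint_left.1 hAF haA haF

theorem redSat_standard_of_subsumes (hα : A ⊆ A' ∪ C') (hβ : B ⊆ B' ∪ D')
    (hβ' : (A ∩ (A' \ C')).Nonempty → B ⊆ B') (hγ : C ⊆ C') (hδ : D ⊆ B' ∪ D')
    {X Y : Set V} (hXY : X ⊆ Y) (hY : (standard A B C D).sat Y)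
    (hX : (standard A B C D).redSat Y X) : (standard A' B' C' D').redSat Y X := by
  rw [sat_standard] at hY
  rw [redSat_standard] at hX ⊢
  intro hC'Y hD'Y hB'X
  have hCY : Disjoint C Y := hC'Y.mono_left hγ
  have hDY : D ⊆ Y := hδ.trans (union_subset (hB'X.trans hXY) hD'Y)
  have hA'_of_A : ∀ a ∈ A, a ∈ Y → a ∈ A' := fun a haA haY =>
    (hα haA).resolve_right fun haC' => disjoint_left.1 hC'Y haC' haY
  by_cases hBX : B ⊆ X
  · obtain ⟨a, haA, haX⟩ := hX hCY hDY hBX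
    exact ⟨a, hA'_of_A a haA (hXY haX), haX⟩
  · -- `r` fires at `Y` only, so its head atom forces `B ⊆ B' ⊆ X` through (β')
    obtain ⟨a, haA, haY⟩ := hY (hβ.trans (union_subset (hB'X.trans hXY) hD'Y)) hCY hDY
    have hB : B ⊆ B' :=
      hβ' ⟨a, haA, hA'_of_A a haA haY, fun haC' => disjoint_left.1 hC'Y haC' haY⟩
    exact (hBX (hB.trans hB'X)).elim

theorem subsumes_conditions_of_forall_redSat
    (hAB' : Disjoint A' B') (hBC' : Disjoint B' C') (hCD' : Disjoint C' D')
    (h : ∀ X Y, X ⊆ Y → (standard A B C D).sat Y → (standard A B C D).redSat Y X →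
      (standard A' B' C' D').redSat Y X) :
    A ⊆ A' ∪ C' ∧ B ⊆ B' ∪ D' ∧ ((A ∩ (A' \ C')).Nonempty → B ⊆ B') ∧
      C ⊆ C' ∧ D ⊆ B' ∪ D' := by
  have hcounter := fun {E F : Set V} (hCE : Disjoint C' E) (hAF : Disjoint A' F)
      (hFE : F ⊆ E) (hY : (standard A B C D).sat (B' ∪ D' ∪ E))
      (hX : (standard A B C D).redSat (B' ∪ D' ∪ E) (B' ∪ F)) =>
    not_redSat_standard hAB' hBC' hCD' hCE hAF
      (h _ _ (union_subset_union subset_union_left hFE) hY hX)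
  refine ⟨fun a haA => ?_, fun b hbB => ?_, fun ⟨a, haA, haA', haC'⟩ b hbB => ?_,
    fun c hcC => ?_, fun d hdD => ?_⟩ <;> by_contra hn
  · exact hcounter (disjoint_singleton_right.2 fun h => hn (Or.inr h))
      (disjoint_singleton_right.2 fun h => hn (Or.inl h)) subset_rfl
      (sat_standard.2 fun _ _ _ => ⟨a, haA, Or.inr rfl⟩)
      (redSat_standard.2 fun _ _ _ => ⟨a, haA, Or.inr rfl⟩)
  · have hb : b ∉ B' ∪ D' ∪ ∅ := by simpa using hn
    exact hcounter (disjoint_empty _) (disjoint_empty _) subset_rfl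
      (sat_standard.2 fun hB => (hb (hB hbB)).elim)
      (redSat_standard.2 fun _ _ hB => (hn (Or.inl (by simpa using hB hbB))).elim)
  · exact hcounter (disjoint_singleton_right.2 haC') (disjoint_empty _) (empty_subset _)
      (sat_standard.2 fun _ _ _ => ⟨a, haA, Or.inr rfl⟩)
      (redSat_standard.2 fun _ _ hB => (hn (by simpa using hB hbB)).elim)
  · have hc : c ∈ B' ∪ D' ∪ {c} := Or.inr rfl
    exact hcounter (disjoint_singleton_right.2 hn) (disjoint_empty _) (empty_subset _)
      (sat_standard.2 fun _ hCY => (disjoint_left.1 hCY hcC hc).elim)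
      (redSat_standard.2 fun hCY => (disjoint_left.1 hCY hcC hc).elim)
  · have hd : d ∉ B' ∪ D' ∪ ∅ := by simpa using hn
    exact hcounter (disjoint_empty _) (disjoint_empty _) subset_rfl
      (sat_standard.2 fun _ _ hD => (hd (hD hdD)).elim)
      (redSat_standard.2 fun _ hD => (hd (hD hdD)).elim)

theorem standard_subsumes_iff (hAB' : Disjoint A' B') (hBC' : Disjoint B' C')
    (hCD' : Disjoint C' D') :
    (∀ X Y, X ⊆ Y → (standard A B C D).sat Y → (standard A B C D).redSat Y X →
      (standard A' B' C' D').redSat Y X) ↔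
    (A ⊆ A' ∪ C' ∧ B ⊆ B' ∪ D' ∧ ((A ∩ (A' \ C')).Nonempty → B ⊆ B') ∧
      C ⊆ C' ∧ D ⊆ B' ∪ D') :=
  ⟨subsumes_conditions_of_forall_redSat hAB' hBC' hCD',
    fun ⟨hα, hβ, hβ', hγ, hδ⟩ _ _ => redSat_standard_of_subsumes hα hβ hβ' hγ hδ⟩

end Standard

end Rule

theorem stmt16_general {V : Type} (𝒜 A B C D A' B' C' D' : Set V)
    (hs : ¬ Program.strongEq
        (Program.mk 𝒜 {Rule.mk A' B' (Lit.pos '' C' ∪ Lit.neg '' D')})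
        (Program.mk 𝒜 ∅)) :
    Program.strongEq
        (Program.mk 𝒜 {Rule.mk A B (Lit.pos '' C ∪ Lit.neg '' D)})
        (Program.mk 𝒜 ({Rule.mk A B (Lit.pos '' C ∪ Lit.neg '' D),
          Rule.mk A' B' (Lit.pos '' C' ∪ Lit.neg '' D')})) ↔
      (A ⊆ A' ∪ C' ∧ B ⊆ B' ∪ D' ∧ ((A ∩ (A' \ C')).Nonempty → B ⊆ B') ∧
        C ⊆ C' ∧ D ⊆ B' ∪ D') := by
  obtain ⟨hA'B', hB'C', hC'D'⟩ := Rule.disjoint_of_not_tautological hs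
  exact Rule.subsumes_iff.trans (Rule.standard_subsumes_iff hA'B' hB'C' hC'D')

/-- A standard rule `r = A ← B, ¬C, ¬¬D` subsumes a non-tautological
standard rule `s = A' ← B', ¬C', ¬¬D'` iff (α) `A ⊆ A' ∪ C'`, (β) `B ⊆ B' ∪ D'`,
(β') `A ∩ (A'∖C') ≠ ∅ → B ⊆ B'`, (γ) `C ⊆ C'`, and (δ) `D ⊆ B' ∪ D'`. -/
theorem stmt16 {V : Type} (𝒜 A B C D A' B' C' D' : Set V)
    (hA : A ⊆ 𝒜) (hB : B ⊆ 𝒜) (hC : C ⊆ 𝒜) (hD : D ⊆ 𝒜)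
    (hA' : A' ⊆ 𝒜) (hB' : B' ⊆ 𝒜) (hC' : C' ⊆ 𝒜) (hD' : D' ⊆ 𝒜)
    (hs : ¬ Program.strongEq
        (Program.mk 𝒜 {Rule.mk A' B' (Lit.pos '' C' ∪ Lit.neg '' D')})
        (Program.mk 𝒜 ∅)) :
    Program.strongEq
        (Program.mk 𝒜 {Rule.mk A B (Lit.pos '' C ∪ Lit.neg '' D)})
        (Program.mk 𝒜 ({Rule.mk A B (Lit.pos '' C ∪ Lit.neg '' D),
          Rule.mk A' B' (Lit.pos '' C' ∪ Lit.neg '' D')})) ↔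
      (A ⊆ A' ∪ C' ∧ B ⊆ B' ∪ D' ∧ ((A ∩ (A' \ C')).Nonempty → B ⊆ B') ∧
        C ⊆ C' ∧ D ⊆ B' ∪ D') :=
  stmt16_general 𝒜 A B C D A' B' C' D' hs
end
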